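/- arXiv:1603.00945 — 4 statements merged into one kernel-verified Lean document; each statement's English description precedes it below -/
import Mathlib

section
/- Let α ≥ 0, n ∈ ℤ⁺, let x_{n,0}^{(α)} < ⋯ < x_{n,n}^{(α)} be the Gegenbauer–Gauss points with Lagrange basis polynomials ℒ_{n,i}^{(α)}, and set p_{B,j,i} = ∫_{−1}^{x_{n,j}^{(α)}} ℒ_{n,i}^{(α)}(x) dx. If f ∈ C^{n+1}[−1, 1] with ‖f^{(n+1)}‖_{L^∞[−1,1]} ≤ A for some A > 0, then for every j ∈ {0, …, n}: |∫_{−1}^{x_{n,j}^{(α)}} f(x) dx − Σ_{i=0}^{n} p_{B,j,i} f(x_{n,i}^{(α)})| ≤ A · 2^{−n} · (x_{n,j}^{(α)} + 1) · Γ(α + 1) Γ(n + 2α + 1) / (Γ(2α + 1) Γ(n + 2) Γ(n + α + 1)). -/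
open Set Polynomial

set_option maxHeartbeats 1000000


lemma bgq_poly_contDiff (p : Polynomial ℝ) {n : ℕ∞} : ContDiff ℝ n fun t : ℝ => p.eval t := by
  induction p using Polynomial.induction_on' with
  | add p q hp hq => simpa [Polynomial.eval_add] using hp.add hq
  | monomial k a =>
      simpa [Polynomial.eval_monomial] using
        (contDiff_const.mul (contDiff_id.pow k) : ContDiff ℝ n fun t : ℝ => a * t ^ k)

/-- Iterated Rolle: a `C^m` function vanishing on `m+1` points of `[a,b]` has a vanishing
`m`-th derivative (within `[a,b]`) somewhere in `[a,b]`. -/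
lemma bgq_rolle : ∀ (m : ℕ) (a b : ℝ) (g : ℝ → ℝ), ContDiffOn ℝ m g (Icc a b) →
    ∀ S : Finset ℝ, S.card = m + 1 → ↑S ⊆ Icc a b → (∀ s ∈ S, g s = 0) →
    ∃ ξ ∈ Icc a b, iteratedDerivWithin m g (Icc a b) ξ = 0 := by
  intro m
  induction m with
  | zero =>
      intro a b g _ S hcard hsub hzero
      obtain ⟨s, hs⟩ := Finset.card_pos.mp (by omega : 0 < S.card)
      exact ⟨s, hsub hs, by simpa using hzero s hs⟩
  | succ m IH =>
      intro a b g hg S hcard hsub hzero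
      set e := S.orderIsoOfFin hcard with he
      set p : Fin (m + 2) → ℝ := fun i => (e i : ℝ) with hp
      have hpmono : StrictMono p := fun i j hij => by
        exact (Subtype.coe_lt_coe.mpr (e.strictMono hij))
      have hpS : ∀ i, p i ∈ S := fun i => (e i).2
      have hpmem : ∀ i, p i ∈ Icc a b := fun i => hsub (hpS i)
      have hab : a < b := by
        have h01 : p 0 < p 1 := hpmono (by norm_num)
        have := (hpmem 0).1
        have := (hpmem 1).2
        linarith
      -- Rolle between consecutive points
      have hroll : ∀ i : Fin (m + 1), ∃ c ∈ Ioo (p i.castSucc) (p i.succ), deriv g c = 0 := by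
        intro i
        have hlt : p i.castSucc < p i.succ := hpmono (Fin.castSucc_lt_succ (i := i))
        have hcont : ContinuousOn g (Icc (p i.castSucc) (p i.succ)) :=
          hg.continuousOn.mono (Icc_subset_Icc (hpmem _).1 (hpmem _).2)
        have heq : g (p i.castSucc) = g (p i.succ) := by
          rw [hzero _ (hpS _), hzero _ (hpS _)]
        exact exists_deriv_eq_zero hlt hcont heq
      choose c hc1 hc2 using hroll
      have hcmono : StrictMono c := by
        intro i j hij
        calc c i < p i.succ := (hc1 i).2
          _ ≤ p j.castSucc := by
              rcases eq_or_lt_of_le (Fin.succ_le_castSucc_iff.mpr hij : i.succ ≤ j.castSucc) with h | h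
              · exact le_of_eq (congrArg p h)
              · exact le_of_lt (hpmono h)
          _ < c j := (hc1 j).1
      have hcIoo : ∀ i, c i ∈ Ioo a b := by
        intro i
        exact ⟨lt_of_le_of_lt (hpmem i.castSucc).1 (hc1 i).1,
          lt_of_lt_of_le (hc1 i).2 (hpmem i.succ).2⟩
      have hud : UniqueDiffOn ℝ (Icc a b) := uniqueDiffOn_Icc hab
      set g' : ℝ → ℝ := derivWithin g (Icc a b) with hg'
      have hg'cd : ContDiffOn ℝ m g' (Icc a b) := by
        apply hg.derivWithin hud
        exact_mod_cast le_refl _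
      set C : Finset ℝ := Finset.image c Finset.univ with hC
      have hCcard : C.card = m + 1 := by
        rw [hC, Finset.card_image_of_injective _ hcmono.injective, Finset.card_univ,
          Fintype.card_fin]
      have hCsub : ↑C ⊆ Icc a b := by
        intro y hy
        simp only [hC, Finset.coe_image, Set.mem_image] at hy
        obtain ⟨i, _, rfl⟩ := hy
        exact Ioo_subset_Icc_self (hcIoo i)
      have hCzero : ∀ s ∈ C, g' s = 0 := by
        intro s hs
        simp only [hC, Finset.mem_image, Finset.mem_univ, true_and] at hs
        obtain ⟨i, rfl⟩ := hs
        rw [hg', derivWithin_of_mem_nhds (Icc_mem_nhds (hcIoo i).1 (hcIoo i).2)]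
        exact hc2 i
      obtain ⟨ξ, hξ, hξ0⟩ := IH a b g' hg'cd C hCcard hCsub hCzero
      refine ⟨ξ, hξ, ?_⟩
      rw [iteratedDerivWithin_succ']
      exact hξ0

lemma bgq_iterate_derivative_eq_C : ∀ (k : ℕ) (p : Polynomial ℝ), p.natDegree ≤ k →
    derivative^[k] p = C ((k.factorial : ℝ) * p.coeff k) := by
  intro k
  induction k with
  | zero =>
      intro p hp
      rw [Polynomial.eq_C_of_natDegree_le_zero hp]
      simp
  | succ k IH =>
      intro p hp
      rw [Function.iterate_succ_apply, IH _ (by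
        have := Polynomial.natDegree_derivative_le p; omega),
        Polynomial.coeff_derivative]
      congr 1
      push_cast [Nat.factorial_succ]
      ring

lemma bgq_poly_idw (p : Polynomial ℝ) (a b : ℝ) (hab : a < b) :
    ∀ (k : ℕ) (t : ℝ), t ∈ Icc a b →
      iteratedDerivWithin k (fun s => p.eval s) (Icc a b) t = (derivative^[k] p).eval t := by
  have hud : UniqueDiffOn ℝ (Icc a b) := uniqueDiffOn_Icc hab
  intro k
  induction k generalizing p with
  | zero => intro t _; simp
  | succ k IH =>
      intro t ht
      rw [iteratedDerivWithin_succ']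
      have hcongr : Set.EqOn (derivWithin (fun s => p.eval s) (Icc a b))
          (fun s => (derivative p).eval s) (Icc a b) := by
        intro y hy
        exact p.derivWithin (hud.uniqueDiffWithinAt hy)
      rw [iteratedDerivWithin_congr hcongr ht, IH (derivative p) t ht,
        ← Function.iterate_succ_apply]

lemma bgq_interp_error (n : ℕ) (x : Fin (n + 1) → ℝ) (hxinj : Function.Injective x)
    (hxmem : ∀ i, x i ∈ Icc (-1 : ℝ) 1)
    (f : ℝ → ℝ) (hf : ContDiffOn ℝ (n + 1 : ℕ) f (Icc (-1 : ℝ) 1))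
    (q : Polynomial ℝ) (hqdeg : q.natDegree ≤ n) (hq : ∀ i, q.eval (x i) = f (x i))
    (A : ℝ)
    (hbound : ∀ t ∈ Icc (-1 : ℝ) 1, |iteratedDerivWithin (n + 1) f (Icc (-1 : ℝ) 1) t| ≤ A) :
    ∀ t ∈ Icc (-1 : ℝ) 1,
      |f t - q.eval t| ≤ A / (n + 1).factorial * |∏ i, (t - x i)| := by
  intro t ht
  have hA0 : 0 ≤ A := le_trans (abs_nonneg _) (hbound t ht)
  by_cases hti : ∃ i, t = x i
  · obtain ⟨i, rfl⟩ := hti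
    rw [hq i, sub_self, abs_zero]
    positivity
  · set ω : Polynomial ℝ := ∏ i, (X - C (x i)) with hω
    have hωmonic : ω.Monic := monic_prod_of_monic _ _ fun i _ => monic_X_sub_C (x i)
    have hωdeg : ω.natDegree = n + 1 := by
      rw [hω, Polynomial.natDegree_prod_of_monic _ _ fun i _ => monic_X_sub_C (x i)]
      simp
    have hωeval : ∀ s : ℝ, ω.eval s = ∏ i, (s - x i) := by
      intro s; simp [hω, Polynomial.eval_prod]
    have hωt : ω.eval t ≠ 0 := by
      rw [hωeval]
      exact Finset.prod_ne_zero_iff.mpr fun i _ => sub_ne_zero_of_ne fun h => hti ⟨i, h⟩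
    set K : ℝ := (f t - q.eval t) / ω.eval t with hK
    set P : Polynomial ℝ := q + C K * ω with hP
    have hPt : P.eval t = f t := by
      simp only [hP, Polynomial.eval_add, Polynomial.eval_mul, Polynomial.eval_C, hK]
      rw [div_mul_cancel₀ _ hωt]; ring
    have hPx : ∀ i, P.eval (x i) = f (x i) := by
      intro i
      have : ω.eval (x i) = 0 := by
        rw [hωeval]
        exact Finset.prod_eq_zero (Finset.mem_univ i) (sub_self _)
      simp [hP, this, hq i]
    set g : ℝ → ℝ := fun s => f s - P.eval s with hg
    have hgcd : ContDiffOn ℝ (n + 1 : ℕ) g (Icc (-1 : ℝ) 1) :=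
      hf.sub (bgq_poly_contDiff P).contDiffOn
    set S : Finset ℝ := insert t (Finset.image x Finset.univ) with hS
    have htni : t ∉ Finset.image x Finset.univ := by
      simp only [Finset.mem_image, Finset.mem_univ, true_and]
      exact fun ⟨i, h⟩ => hti ⟨i, h.symm⟩
    have hScard : S.card = (n + 1) + 1 := by
      rw [hS, Finset.card_insert_of_notMem htni,
        Finset.card_image_of_injective _ hxinj, Finset.card_univ, Fintype.card_fin]
    have hSsub : ↑S ⊆ Icc (-1 : ℝ) 1 := by
      intro y hy
      simp only [hS, Finset.coe_insert, Set.mem_insert_iff, Finset.coe_image,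
        Set.mem_image] at hy
      rcases hy with rfl | ⟨i, _, rfl⟩
      · exact ht
      · exact hxmem i
    have hSzero : ∀ s ∈ S, g s = 0 := by
      intro s hs
      simp only [hS, Finset.mem_insert, Finset.mem_image, Finset.mem_univ, true_and] at hs
      rcases hs with rfl | ⟨i, rfl⟩
      · simp [hg, hPt]
      · simp [hg, hPx i]
    obtain ⟨ξ, hξmem, hξ⟩ := bgq_rolle (n + 1) (-1) 1 g hgcd S hScard hSsub hSzero
    have hud : UniqueDiffOn ℝ (Icc (-1 : ℝ) 1) := uniqueDiffOn_Icc (by norm_num)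
    have hsplit : iteratedDerivWithin (n + 1) g (Icc (-1 : ℝ) 1) ξ =
        iteratedDerivWithin (n + 1) f (Icc (-1 : ℝ) 1) ξ -
          iteratedDerivWithin (n + 1) (fun s => P.eval s) (Icc (-1 : ℝ) 1) ξ := by
      have := iteratedDerivWithin_sub hξmem hud (hf.contDiffWithinAt hξmem) (bgq_poly_contDiff P).contDiffWithinAt
      simpa [hg, Pi.sub_def] using this
    have hPdeg : P.natDegree ≤ n + 1 := by
      refine le_trans (Polynomial.natDegree_add_le _ _) (max_le (by omega) ?_)
      exact le_trans (Polynomial.natDegree_C_mul_le _ _) (le_of_eq hωdeg)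
    have hPcoeff : P.coeff (n + 1) = K := by
      rw [hP, Polynomial.coeff_add, Polynomial.coeff_C_mul,
        Polynomial.coeff_eq_zero_of_natDegree_lt (by omega : q.natDegree < n + 1)]
      have : ω.coeff (n + 1) = 1 := by
        have := hωmonic.coeff_natDegree
        rwa [hωdeg] at this
      rw [this]; ring
    have hPiter : iteratedDerivWithin (n + 1) (fun s => P.eval s) (Icc (-1 : ℝ) 1) ξ =
        ((n + 1).factorial : ℝ) * K := by
      rw [bgq_poly_idw P (-1) 1 (by norm_num) (n + 1) ξ hξmem,
        bgq_iterate_derivative_eq_C (n + 1) P hPdeg, hPcoeff, Polynomial.eval_C]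
    have hKbound : |K| ≤ A / (n + 1).factorial := by
      have hfac : (0 : ℝ) < (n + 1).factorial := by positivity
      have h1 : iteratedDerivWithin (n + 1) f (Icc (-1 : ℝ) 1) ξ =
          ((n + 1).factorial : ℝ) * K := by
        have := hξ
        rw [hsplit, hPiter] at this
        linarith
      have h2 := hbound ξ hξmem
      rw [h1, abs_mul, abs_of_pos hfac] at h2
      rw [le_div_iff₀ hfac]
      linarith
    have hfq : f t - q.eval t = K * ω.eval t := by
      rw [hK, div_mul_cancel₀ _ hωt]
    rw [hfq, abs_mul, ← hωeval]
    exact mul_le_mul_of_nonneg_right hKbound (abs_nonneg _)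


section Geg
variable (α : ℝ) (G : ℕ → Polynomial ℝ)

lemma bgq_rec'
    (hGrec : ∀ k : ℕ, 1 ≤ k →
      C ((k : ℝ) + 2 * α) * G (k + 1) =
        C (2 * ((k : ℝ) + α)) * (X * G k) - C (k : ℝ) * G (k - 1))
    (m : ℕ) :
    C ((m : ℝ) + 1 + 2 * α) * G (m + 2) =
      C (2 * ((m : ℝ) + 1 + α)) * (X * G (m + 1)) - C ((m : ℝ) + 1) * G m := by
  have h := hGrec (m + 1) (by omega)
  push_cast at h
  simpa [Nat.add_sub_cancel] using h

variable (hα : 0 ≤ α) (hG0 : G 0 = 1) (hG1 : G 1 = Polynomial.X)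
variable (hGrec' : ∀ m : ℕ,
    C ((m : ℝ) + 1 + 2 * α) * G (m + 2) =
      C (2 * ((m : ℝ) + 1 + α)) * (X * G (m + 1)) - C ((m : ℝ) + 1) * G m)

include hα hG0 hG1 hGrec'

lemma bgq_eval_one : ∀ m, (G m).eval 1 = 1 := by
  have key : ∀ m, (G m).eval 1 = 1 ∧ (G (m + 1)).eval 1 = 1 := by
    intro m
    induction m with
    | zero => constructor <;> simp [hG0, hG1]
    | succ m ih =>
        refine ⟨ih.2, ?_⟩
        have h := congrArg (Polynomial.eval (1 : ℝ)) (hGrec' m)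
        simp only [Polynomial.eval_mul, Polynomial.eval_sub, Polynomial.eval_C,
          Polynomial.eval_X, ih.1, ih.2, mul_one, one_mul] at h
        have hpos : ((m : ℝ) + 1 + 2 * α) ≠ 0 := by positivity
        have : ((m : ℝ) + 1 + 2 * α) * (G (m + 2)).eval 1 =
            ((m : ℝ) + 1 + 2 * α) * 1 := by rw [h]; ring
        exact mul_left_cancel₀ hpos this
  exact fun m => (key m).1

lemma bgq_eval_neg_one : ∀ m, (G m).eval (-1) = (-1) ^ m := by
  have key : ∀ m, (G m).eval (-1) = (-1) ^ m ∧ (G (m + 1)).eval (-1) = (-1) ^ (m + 1) := by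
    intro m
    induction m with
    | zero => constructor <;> simp [hG0, hG1]
    | succ m ih =>
        refine ⟨ih.2, ?_⟩
        have h := congrArg (Polynomial.eval (-1 : ℝ)) (hGrec' m)
        simp only [Polynomial.eval_mul, Polynomial.eval_sub, Polynomial.eval_C,
          Polynomial.eval_X, ih.1, ih.2] at h
        have hpos : ((m : ℝ) + 1 + 2 * α) ≠ 0 := by positivity
        have : ((m : ℝ) + 1 + 2 * α) * (G (m + 2)).eval (-1) =
            ((m : ℝ) + 1 + 2 * α) * (-1) ^ (m + 2) := by
          rw [h]; ring_nf
        exact mul_left_cancel₀ hpos this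
  exact fun m => (key m).1

end Geg

noncomputable def bgqLead (α : ℝ) (n : ℕ) : ℝ :=
  ∏ k ∈ Finset.range n, (2 * ((k : ℝ) + 1 + α) / ((k : ℝ) + 1 + 2 * α))

lemma bgqLead_pos {α : ℝ} (hα : 0 ≤ α) (n : ℕ) : 0 < bgqLead α n :=
  Finset.prod_pos fun k _ => by positivity

section Geg2
variable (α : ℝ) (G : ℕ → Polynomial ℝ)
variable (hα : 0 ≤ α) (hG0 : G 0 = 1) (hG1 : G 1 = Polynomial.X)
variable (hGrec' : ∀ m : ℕ,
    C ((m : ℝ) + 1 + 2 * α) * G (m + 2) =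
      C (2 * ((m : ℝ) + 1 + α)) * (X * G (m + 1)) - C ((m : ℝ) + 1) * G m)

include hα hG0 hG1 hGrec'

lemma bgq_deg_coeff : ∀ m, ((G m).natDegree ≤ m ∧ (G (m + 1)).natDegree ≤ m + 1) ∧
    ((G (m + 1)).coeff (m + 1) = bgqLead α m) := by
  intro m
  induction m with
  | zero =>
      refine ⟨⟨by simp [hG0], by simp [hG1]⟩, ?_⟩
      simp [hG1, bgqLead]
  | succ m ih =>
      have hane : ((m : ℝ) + 1 + 2 * α) ≠ 0 := by positivity
      have hdeg2 : (G (m + 2)).natDegree ≤ m + 2 := by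
        have h := hGrec' m
        have hleft : (C ((m : ℝ) + 1 + 2 * α) * G (m + 2)).natDegree = (G (m + 2)).natDegree :=
          Polynomial.natDegree_C_mul hane
        have hright : (C (2 * ((m : ℝ) + 1 + α)) * (X * G (m + 1)) -
            C ((m : ℝ) + 1) * G m).natDegree ≤ m + 2 := by
          refine le_trans (Polynomial.natDegree_sub_le _ _) (max_le ?_ ?_)
          · refine le_trans (Polynomial.natDegree_C_mul_le _ _) ?_
            refine le_trans (Polynomial.natDegree_mul_le) ?_
            have h1 := Polynomial.natDegree_X_le (R := ℝ)
            have h2 := ih.1.2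
            omega
          · refine le_trans (Polynomial.natDegree_C_mul_le _ _) ?_
            have h2 := ih.1.1
            omega
        rw [← hleft, h]
        exact hright
      refine ⟨⟨ih.1.2, hdeg2⟩, ?_⟩
      have h := congrArg (fun p : Polynomial ℝ => p.coeff (m + 2)) (hGrec' m)
      simp only [Polynomial.coeff_C_mul, Polynomial.coeff_sub, Polynomial.coeff_X_mul,
        ih.2, Polynomial.coeff_eq_zero_of_natDegree_lt
          (lt_of_le_of_lt ih.1.1 (by omega : m < m + 2)), mul_zero, sub_zero] at h
      have hstep : bgqLead α (m + 1) =
          bgqLead α m * (2 * ((m : ℝ) + 1 + α) / ((m : ℝ) + 1 + 2 * α)) := by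
        rw [bgqLead, Finset.prod_range_succ]; rfl
      rw [hstep]
      field_simp
      linarith [h]

end Geg2


section GegD
variable {α : ℝ} {G : ℕ → Polynomial ℝ}
variable (hα : 0 ≤ α) (hG0 : G 0 = 1) (hG1 : G 1 = Polynomial.X)
variable (hGrec' : ∀ m : ℕ,
    C ((m : ℝ) + 1 + 2 * α) * G (m + 2) =
      C (2 * ((m : ℝ) + 1 + α)) * (X * G (m + 1)) - C ((m : ℝ) + 1) * G m)

include hα hG0 hG1 hGrec'

lemma bgq_D1 : ∀ m : ℕ, (1 - X ^ 2 : Polynomial ℝ) * derivative (G (m + 1)) =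
    C ((m : ℝ) + 1) * (G m - X * G (m + 1)) := by
  have hC : ∀ a : ℝ, a ≠ 0 → ∀ p q : Polynomial ℝ, C a * p = C a * q → p = q := by
    intro a ha p q h
    exact mul_left_cancel₀ (by simpa using ha) h
  have key : ∀ m : ℕ, ((1 - X ^ 2 : Polynomial ℝ) * derivative (G (m + 1)) =
      C ((m : ℝ) + 1) * (G m - X * G (m + 1))) ∧
      ((1 - X ^ 2 : Polynomial ℝ) * derivative (G (m + 1 + 1)) =
      C (((m + 1 : ℕ) : ℝ) + 1) * (G (m + 1) - X * G (m + 1 + 1))) := by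
    intro m
    induction m with
    | zero =>
        constructor
        · simp [hG0, hG1]; ring
        · have R0 := hGrec' 0
          have E0 := congrArg derivative R0
          simp only [derivative_mul, derivative_sub, derivative_C, derivative_X,
            zero_mul, add_zero, zero_add, one_mul, mul_one, zero_sub, sub_zero,
            hG0, hG1, derivative_one] at E0 R0
          push_cast at E0 R0 ⊢
          apply hC ((1 : ℝ) + 2 * α) (by positivity)
          rw [hG1]
          simp only [map_add, map_mul, map_sub, map_one, map_zero, map_ofNat] at E0 R0 ⊢
          linear_combination ((1 : Polynomial ℝ) - X ^ 2) * E0 + (2 : Polynomial ℝ) * X * R0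
    | succ m ih =>
        refine ⟨ih.2, ?_⟩
        have R1 := hGrec' (m + 1)
        have Rm := hGrec' m
        have Pm1 := ih.2
        have Pm := ih.1
        have E1 := congrArg derivative R1
        simp only [derivative_mul, derivative_sub, derivative_C, derivative_X,
          zero_mul, add_zero, zero_add, one_mul, mul_one] at E1
        push_cast at R1 Rm Pm1 Pm E1 ⊢
        apply hC ((m : ℝ) + 2 + 2 * α) (by positivity)
        simp only [map_add, map_mul, map_sub, map_one, map_zero, map_ofNat] at R1 Rm Pm1 Pm E1 ⊢
        linear_combination ((1 : Polynomial ℝ) - X ^ 2) * E1 +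
          (C ((m : ℝ)) + 3) * X * R1 + (2 * (C ((m : ℝ)) + 2 + C α)) * X * Pm1 -
          (C ((m : ℝ)) + 2) * Pm - (C ((m : ℝ)) + 2) * Rm
  intro m
  cases m with
  | zero => exact (key 0).1
  | succ m => exact (key m).2

lemma bgq_ODE (m : ℕ) :
    (1 - X ^ 2 : Polynomial ℝ) * derivative (derivative (G (m + 2))) =
      C (2 * α + 1) * (X * derivative (G (m + 2))) -
        C (((m : ℝ) + 2) * ((m : ℝ) + 2 + 2 * α)) * G (m + 2) := by
  have h1x2 : (1 - X ^ 2 : Polynomial ℝ) ≠ 0 := by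
    intro h
    have := congrArg (fun p : Polynomial ℝ => p.coeff 0) h
    simp at this
  apply mul_left_cancel₀ h1x2
  have Pm1 := bgq_D1 hα hG0 hG1 hGrec' (m + 1)
  have Pm := bgq_D1 hα hG0 hG1 hGrec' m
  have Rm := hGrec' m
  have E2 := congrArg derivative Pm1
  simp only [derivative_mul, derivative_sub, derivative_C, derivative_X,
    derivative_one, derivative_pow, zero_mul, add_zero, zero_add, one_mul, mul_one,
    zero_sub, sub_zero, Nat.cast_ofNat, pow_one] at E2
  push_cast at Pm1 Pm Rm E2 ⊢
  simp only [map_add, map_mul, map_sub, map_one, map_zero, map_ofNat] at Pm1 Pm Rm E2 ⊢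
  linear_combination ((1 : Polynomial ℝ) - X ^ 2) * E2 +
    (1 - 2 * C α - (C ((m : ℝ)) + 2)) * X * Pm1 + (C ((m : ℝ)) + 2) * Pm +
    (C ((m : ℝ)) + 2) * Rm

end GegD

section GegBound
variable {α : ℝ} {G : ℕ → Polynomial ℝ}
variable (hα : 0 ≤ α) (hG0 : G 0 = 1) (hG1 : G 1 = Polynomial.X)
variable (hGrec' : ∀ m : ℕ,
    C ((m : ℝ) + 1 + 2 * α) * G (m + 2) =
      C (2 * ((m : ℝ) + 1 + α)) * (X * G (m + 1)) - C ((m : ℝ) + 1) * G m)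

include hα hG0 hG1 hGrec'

lemma bgq_abs_le_one (m : ℕ) : ∀ t ∈ Icc (-1 : ℝ) 1, |(G (m + 2)).eval t| ≤ 1 := by
  intro t ht
  set g : Polynomial ℝ := G (m + 2) with hg
  have hNpos : 0 < ((m : ℝ) + 2) * ((m : ℝ) + 2 + 2 * α) := by positivity
  set N : ℝ := ((m : ℝ) + 2) * ((m : ℝ) + 2 + 2 * α) with hN
  set W : Polynomial ℝ := C (((m : ℝ) + 2) * ((m : ℝ) + 2 + 2 * α)) * g ^ 2 +
    (1 - X ^ 2) * (derivative g) ^ 2 with hW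
  have hW' : derivative W = C (4 * α) * (X * (derivative g) ^ 2) := by
    have hODE := bgq_ODE hα hG0 hG1 hGrec' m
    rw [hW]
    simp only [derivative_add, derivative_mul, derivative_C, derivative_pow,
      derivative_sub, derivative_X, derivative_one, zero_mul, add_zero, zero_add,
      one_mul, mul_one, zero_sub, Nat.cast_ofNat, pow_one]
    simp only [map_add, map_mul, map_sub, map_one, map_zero, map_ofNat] at hODE ⊢
    linear_combination (2 : Polynomial ℝ) * derivative g * hODE
  have hderiv : ∀ s : ℝ, deriv (fun u : ℝ => W.eval u) s =
      4 * α * s * ((derivative g).eval s) ^ 2 := by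
    intro s
    rw [Polynomial.deriv, hW']
    simp [Polynomial.eval_mul, Polynomial.eval_pow]
    ring
  have hcont : Continuous fun u : ℝ => W.eval u :=
    (bgq_poly_contDiff W (n := 1)).continuous
  have hdiff : Differentiable ℝ fun u : ℝ => W.eval u :=
    (bgq_poly_contDiff W (n := 1)).differentiable (by norm_num)
  have hmono : MonotoneOn (fun u : ℝ => W.eval u) (Icc 0 1) := by
    apply monotoneOn_of_deriv_nonneg (convex_Icc 0 1) hcont.continuousOn
      hdiff.differentiableOn
    intro s hs
    rw [interior_Icc] at hs
    rw [hderiv]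
    have h0 : (0 : ℝ) ≤ s := le_of_lt hs.1
    positivity
  have hanti : AntitoneOn (fun u : ℝ => W.eval u) (Icc (-1) 0) := by
    apply antitoneOn_of_deriv_nonpos (convex_Icc (-1) 0) hcont.continuousOn
      hdiff.differentiableOn
    intro s hs
    rw [interior_Icc] at hs
    rw [hderiv]
    have hs0 : s ≤ 0 := le_of_lt hs.2
    nlinarith [mul_nonneg hα (sq_nonneg ((derivative g).eval s)), hs0]
  have hg1 : g.eval 1 = 1 := bgq_eval_one α G hα hG0 hG1 hGrec' (m + 2)
  have hgm1 : g.eval (-1) = (-1) ^ (m + 2) := bgq_eval_neg_one α G hα hG0 hG1 hGrec' (m + 2)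
  have hW1 : W.eval 1 = N := by
    simp [hW, Polynomial.eval_add, Polynomial.eval_mul, Polynomial.eval_pow,
      Polynomial.eval_sub, hg1, hN]
  have hWm1 : W.eval (-1) = N := by
    simp only [hW, Polynomial.eval_add, Polynomial.eval_mul, Polynomial.eval_pow,
      Polynomial.eval_sub, Polynomial.eval_one, Polynomial.eval_X, Polynomial.eval_C, hgm1]
    have : ((-1 : ℝ) ^ (m + 2)) ^ 2 = 1 := by
      rw [← pow_mul, mul_comm, pow_mul]
      simp
    rw [this]
    ring
  have hWt : W.eval t ≤ N := by
    rcases le_total 0 t with h0 | h0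
    · have := hmono (mem_Icc.mpr ⟨h0, ht.2⟩) (mem_Icc.mpr ⟨zero_le_one, le_rfl⟩) ht.2
      simpa [hW1] using this
    · have := hanti (mem_Icc.mpr ⟨le_rfl, by norm_num⟩) (mem_Icc.mpr ⟨ht.1, h0⟩) ht.1
      simpa [hWm1] using this
  have hlow : N * (g.eval t) ^ 2 ≤ W.eval t := by
    have h1t : 0 ≤ 1 - t ^ 2 := by nlinarith [ht.1, ht.2]
    have : 0 ≤ (1 - t ^ 2) * ((derivative g).eval t) ^ 2 := by positivity
    simp only [hW, Polynomial.eval_add, Polynomial.eval_mul, Polynomial.eval_pow,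
      Polynomial.eval_sub, Polynomial.eval_one, Polynomial.eval_X, Polynomial.eval_C]
    nlinarith
  have hsq : (g.eval t) ^ 2 ≤ 1 := by nlinarith
  rw [abs_le]
  constructor <;> nlinarith
end GegBound


lemma bgq_gamma_prod (β : ℝ) (hβ : 0 < β) : ∀ n : ℕ,
    Real.Gamma (β + n) = (∏ k ∈ Finset.range n, (β + k)) * Real.Gamma β := by
  intro n
  induction n with
  | zero => simp
  | succ n ih =>
      have h1 : β + ((n : ℝ) + 1) = (β + n) + 1 := by ring
      push_cast
      rw [h1, Real.Gamma_add_one (by positivity), ih, Finset.prod_range_succ]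
      push_cast
      ring

lemma bgqLead_gamma {α : ℝ} (hα : 0 ≤ α) (n : ℕ) :
    bgqLead α n = 2 ^ n * Real.Gamma ((n : ℝ) + α + 1) * Real.Gamma (2 * α + 1) /
      (Real.Gamma (α + 1) * Real.Gamma ((n : ℝ) + 2 * α + 1)) := by
  have hΓa : 0 < Real.Gamma (α + 1) := Real.Gamma_pos_of_pos (by positivity)
  have hΓ2a : 0 < Real.Gamma (2 * α + 1) := Real.Gamma_pos_of_pos (by positivity)
  have h1 := bgq_gamma_prod (α + 1) (by positivity) n
  have h2 := bgq_gamma_prod (2 * α + 1) (by positivity) n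
  have hP1pos : 0 < ∏ k ∈ Finset.range n, ((α + 1) + (k : ℝ)) :=
    Finset.prod_pos fun k _ => by positivity
  have hP2pos : 0 < ∏ k ∈ Finset.range n, ((2 * α + 1) + (k : ℝ)) :=
    Finset.prod_pos fun k _ => by positivity
  have e2 : ∏ k ∈ Finset.range n, (2 * ((k : ℝ) + 1 + α)) =
      (2 : ℝ) ^ n * ∏ k ∈ Finset.range n, ((α + 1) + (k : ℝ)) := by
    rw [Finset.prod_mul_distrib, Finset.prod_const, Finset.card_range]
    congr 1
    exact Finset.prod_congr rfl fun k _ => by ring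
  have e3 : ∏ k ∈ Finset.range n, ((k : ℝ) + 1 + 2 * α) =
      ∏ k ∈ Finset.range n, ((2 * α + 1) + (k : ℝ)) :=
    Finset.prod_congr rfl fun k _ => by ring
  have e1 : bgqLead α n = (2 : ℝ) ^ n * (∏ k ∈ Finset.range n, ((α + 1) + (k : ℝ))) /
      (∏ k ∈ Finset.range n, ((2 * α + 1) + (k : ℝ))) := by
    rw [bgqLead, Finset.prod_div_distrib, e2, e3]
  have ha1 : (n : ℝ) + α + 1 = (α + 1) + n := by ring
  have ha2 : (n : ℝ) + 2 * α + 1 = (2 * α + 1) + n := by ring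
  rw [e1, ha1, ha2, h1, h2]
  field_simp

/-- **Error bound for the barycentric Gegenbauer quadrature, case `α ≥ 0`.**
With Gegenbauer–Gauss points `x 0 < ⋯ < x n`, Lagrange basis polynomials `L i`,
`p_{B,j,i} = ∫_{-1}^{x j} (L i)(t) dt`, and `f ∈ C^{n+1}[-1,1]` with
`‖f^{(n+1)}‖_∞ ≤ A`, for every `j`:
`|∫_{-1}^{x j} f - ∑ i, p_{B,j,i} f(x i)|
   ≤ A 2^{-n} (x j + 1) Γ(α+1) Γ(n+2α+1) / (Γ(2α+1) Γ(n+2) Γ(n+α+1))`. -/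
theorem barycentric_gegenbauer_quadrature_bound_nonneg_alpha
    (α : ℝ) (hα : 0 ≤ α) (n : ℕ) (hn : 1 ≤ n)
    (G : ℕ → Polynomial ℝ)
    (hG0 : G 0 = 1) (hG1 : G 1 = Polynomial.X)
    (hGrec : ∀ k : ℕ, 1 ≤ k →
      Polynomial.C ((k : ℝ) + 2 * α) * G (k + 1) =
        Polynomial.C (2 * ((k : ℝ) + α)) * (Polynomial.X * G k) -
          Polynomial.C (k : ℝ) * G (k - 1))
    (x : Fin (n + 1) → ℝ)
    (hx_mono : StrictMono x)
    (hx_mem : ∀ i, x i ∈ Set.Ioo (-1 : ℝ) 1)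
    (hx_root : ∀ y : ℝ, (G (n + 1)).eval y = 0 ↔ ∃ i, y = x i)
    (L : Fin (n + 1) → Polynomial ℝ)
    (hL_deg : ∀ k, (L k).natDegree ≤ n)
    (hL_eval : ∀ k j, (L k).eval (x j) = if j = k then (1 : ℝ) else 0)
    (f : ℝ → ℝ)
    (hf : ContDiffOn ℝ (n + 1 : ℕ) f (Set.Icc (-1 : ℝ) 1))
    (A : ℝ) (hA : 0 < A)
    (hbound : ∀ t ∈ Set.Icc (-1 : ℝ) 1,
      |iteratedDerivWithin (n + 1) f (Set.Icc (-1 : ℝ) 1) t| ≤ A) :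
    ∀ j : Fin (n + 1),
      |(∫ t in (-1 : ℝ)..(x j), f t) -
          ∑ i : Fin (n + 1), (∫ t in (-1 : ℝ)..(x j), (L i).eval t) * f (x i)| ≤
        A * (2 : ℝ) ^ (-(n : ℤ)) * (x j + 1) *
          Real.Gamma (α + 1) * Real.Gamma ((n : ℝ) + 2 * α + 1) /
            (Real.Gamma (2 * α + 1) * Real.Gamma ((n : ℝ) + 2) *
              Real.Gamma ((n : ℝ) + α + 1)) := by
  have bgq_rec' : ∀ m : ℕ,
      C ((m : ℝ) + 1 + 2 * α) * G (m + 2) =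
        C (2 * ((m : ℝ) + 1 + α)) * (X * G (m + 1)) - C ((m : ℝ) + 1) * G m := by
    intro m
    have h := hGrec (m + 1) (by omega)
    push_cast at h
    simpa [Nat.add_sub_cancel] using h
  have habs : ∀ m : ℕ, ∀ t ∈ Icc (-1 : ℝ) 1, |(G (m + 2)).eval t| ≤ 1 :=
    fun m => bgq_abs_le_one hα hG0 hG1 bgq_rec' m
  have hdegco : ∀ m : ℕ, ((G m).natDegree ≤ m ∧ (G (m + 1)).natDegree ≤ m + 1) ∧
      ((G (m + 1)).coeff (m + 1) = bgqLead α m) :=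
    bgq_deg_coeff α G hα hG0 hG1 bgq_rec'
  have hinterp : ∀ (q : Polynomial ℝ), q.natDegree ≤ n → (∀ i, q.eval (x i) = f (x i)) →
      ∀ t ∈ Icc (-1 : ℝ) 1,
        |f t - q.eval t| ≤ A / (n + 1).factorial * |∏ i, (t - x i)| :=
    fun q hqd hqe => bgq_interp_error n x hx_mono.injective
      (fun i => Ioo_subset_Icc_self (hx_mem i)) f hf q hqd hqe A hbound
  intro j
  set ℓ : ℝ := bgqLead α n with hℓ
  have hℓpos : 0 < ℓ := bgqLead_pos hα n
  -- the nodal polynomial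
  set ω : Polynomial ℝ := ∏ i : Fin (n + 1), (X - C (x i)) with hω
  have hωmonic : ω.Monic := monic_prod_of_monic _ _ fun i _ => monic_X_sub_C (x i)
  have hωdeg : ω.natDegree = n + 1 := by
    rw [hω, Polynomial.natDegree_prod_of_monic _ _ fun i _ => monic_X_sub_C (x i)]
    simp
  have hωeval : ∀ s : ℝ, ω.eval s = ∏ i, (s - x i) := by
    intro s; simp [hω, Polynomial.eval_prod]
  have hωcoeff : ω.coeff (n + 1) = 1 := by
    have := hωmonic.coeff_natDegree
    rwa [hωdeg] at this
  -- factorization G (n+1) = C ℓ * ω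
  have hfact : G (n + 1) = C ℓ * ω := by
    have hdeg : (G (n + 1)).natDegree ≤ n + 1 := (hdegco n).1.2
    have hcoeff : (G (n + 1)).coeff (n + 1) = ℓ := (hdegco n).2
    set D : Polynomial ℝ := G (n + 1) - C ℓ * ω with hD
    have hD1 : D.natDegree ≤ n + 1 :=
      le_trans (Polynomial.natDegree_sub_le _ _)
        (max_le hdeg (le_trans (Polynomial.natDegree_C_mul_le _ _) hωdeg.le))
    have hDc : D.coeff (n + 1) = 0 := by
      simp [hD, hcoeff, Polynomial.coeff_C_mul, hωcoeff]
    have hDn : D.natDegree ≤ n := by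
      by_contra h
      have h1 : D.natDegree = n + 1 := by omega
      have h2 : D.leadingCoeff = 0 := by rw [Polynomial.leadingCoeff, h1]; exact hDc
      have h3 : D = 0 := Polynomial.leadingCoeff_eq_zero.mp h2
      rw [h3] at h1
      simp at h1
    have hDzero : ∀ i : Fin (n + 1), D.eval (x i) = 0 := by
      intro i
      have h1 : (G (n + 1)).eval (x i) = 0 := (hx_root (x i)).mpr ⟨i, rfl⟩
      have h2 : ω.eval (x i) = 0 := by
        rw [hωeval]
        exact Finset.prod_eq_zero (Finset.mem_univ i) (sub_self _)
      simp [hD, h1, h2]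
    have hD0 : D = 0 := by
      apply Polynomial.eq_zero_of_natDegree_lt_card_of_eval_eq_zero D hx_mono.injective hDzero
      rw [Fintype.card_fin]
      omega
    rw [hD] at hD0
    exact sub_eq_zero.mp hD0
  have hGb : ∀ t ∈ Icc (-1 : ℝ) 1, |(G (n + 1)).eval t| ≤ 1 := by
    obtain ⟨m, rfl⟩ : ∃ m, n = m + 1 := ⟨n - 1, by omega⟩
    exact habs m
  have hωbound : ∀ t ∈ Icc (-1 : ℝ) 1, |ω.eval t| ≤ 1 / ℓ := by
    intro t ht
    have h1 : (G (n + 1)).eval t = ℓ * ω.eval t := by rw [hfact]; simp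
    have h2 := hGb t ht
    rw [h1, abs_mul, abs_of_pos hℓpos] at h2
    rw [le_div_iff₀ hℓpos]
    linarith
  set q : Polynomial ℝ := ∑ i : Fin (n + 1), C (f (x i)) * L i with hq
  have hqdeg : q.natDegree ≤ n :=
    Polynomial.natDegree_sum_le_of_forall_le _ _ fun i _ =>
      le_trans (Polynomial.natDegree_C_mul_le _ _) (hL_deg i)
  have hqeval : ∀ i, q.eval (x i) = f (x i) := by
    intro i
    rw [hq, Polynomial.eval_finset_sum]
    simp only [Polynomial.eval_mul, Polynomial.eval_C, hL_eval]
    simp [Finset.sum_ite_eq]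
  have hfq := hinterp q hqdeg hqeval
  have hfac_pos : (0 : ℝ) < (n + 1).factorial := by positivity
  set Cst : ℝ := A / (n + 1).factorial * (1 / ℓ) with hCst
  have hCstpos : 0 ≤ Cst := by
    rw [hCst]; positivity
  have hpt : ∀ t ∈ Icc (-1 : ℝ) 1, |f t - q.eval t| ≤ Cst := by
    intro t ht
    refine le_trans (hfq t ht) ?_
    rw [hCst]
    have h3 := hωbound t ht
    refine mul_le_mul_of_nonneg_left ?_ (by positivity)
    rw [← hωeval]
    exact h3
  have hxj := hx_mem j
  have hle : (-1 : ℝ) ≤ x j := le_of_lt hxj.1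
  have hsub : Icc (-1 : ℝ) (x j) ⊆ Icc (-1 : ℝ) 1 := Icc_subset_Icc le_rfl (le_of_lt hxj.2)
  have hfc : ContinuousOn f (Icc (-1 : ℝ) 1) := hf.continuousOn
  have hpolyC : ∀ p : Polynomial ℝ, Continuous fun t : ℝ => p.eval t := by
    intro p
    exact p.continuous
  have hfint : IntervalIntegrable f MeasureTheory.volume (-1) (x j) := by
    apply ContinuousOn.intervalIntegrable
    rw [uIcc_of_le hle]
    exact hfc.mono hsub
  have hqint : IntervalIntegrable (fun t => q.eval t) MeasureTheory.volume (-1) (x j) :=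
    (hpolyC q).intervalIntegrable _ _
  have hsum : ∑ i : Fin (n + 1), (∫ t in (-1 : ℝ)..(x j), (L i).eval t) * f (x i)
      = ∫ t in (-1 : ℝ)..(x j), q.eval t := by
    have he : ∀ t : ℝ, q.eval t = ∑ i : Fin (n + 1), f (x i) * (L i).eval t := by
      intro t
      rw [hq, Polynomial.eval_finset_sum]
      simp [Polynomial.eval_mul]
    rw [intervalIntegral.integral_congr (g := fun t => ∑ i : Fin (n + 1), f (x i) * (L i).eval t)
      (fun t _ => he t)]
    rw [intervalIntegral.integral_finset_sum
      (f := fun i t => f (x i) * (L i).eval t)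
      (fun i _ => (continuous_const.mul (hpolyC (L i))).intervalIntegrable _ _)]
    refine Finset.sum_congr rfl fun i _ => ?_
    rw [intervalIntegral.integral_const_mul, mul_comm]
  rw [hsum, ← intervalIntegral.integral_sub hfint hqint]
  have hbnd : ‖∫ t in (-1 : ℝ)..(x j), (f t - q.eval t)‖ ≤ Cst * |x j - (-1)| := by
    apply intervalIntegral.norm_integral_le_of_norm_le_const
    intro t ht'
    rw [uIoc_of_le hle] at ht'
    have htm : t ∈ Icc (-1 : ℝ) 1 := hsub (Ioc_subset_Icc_self ht')
    simpa [Real.norm_eq_abs] using hpt t htm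
  have habsj : |x j - (-1)| = x j + 1 := by
    rw [abs_of_nonneg (by linarith)]
    ring
  rw [Real.norm_eq_abs] at hbnd
  rw [habsj] at hbnd
  refine le_trans hbnd (le_of_eq ?_)
  have hGam2 : Real.Gamma ((n : ℝ) + 2) = (n + 1).factorial := by
    have h5 : ((n : ℝ) + 2) = ((n + 1 : ℕ) : ℝ) + 1 := by push_cast; ring
    rw [h5, Real.Gamma_nat_eq_factorial]
  have hΓa : 0 < Real.Gamma (α + 1) := Real.Gamma_pos_of_pos (by positivity)
  have hΓ2a : 0 < Real.Gamma (2 * α + 1) := Real.Gamma_pos_of_pos (by positivity)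
  have hΓna : 0 < Real.Gamma ((n : ℝ) + α + 1) := Real.Gamma_pos_of_pos (by positivity)
  have hΓn2a : 0 < Real.Gamma ((n : ℝ) + 2 * α + 1) := Real.Gamma_pos_of_pos (by positivity)
  rw [hCst, hℓ, bgqLead_gamma hα n, hGam2, zpow_neg, zpow_natCast]
  field_simp
end

section
/- Let α ≥ 0 and let f ∈ C^∞[−1, 1] satisfy ‖f^{(n+1)}‖_{L^∞[−1,1]} ≤ A for all n ∈ ℤ⁺, where A > 0 is independent of n. For each n let x_{n,0}^{(α)} < ⋯ < x_{n,n}^{(α)} be the Gegenbauer–Gauss points with Lagrange basis polynomials ℒ_{n,i}^{(α)}, and set p_{B,j,i} = ∫_{−1}^{x_{n,j}^{(α)}} ℒ_{n,i}^{(α)}(x) dx. Then there exist a constant B > 0 and an integer n₀ such that for all n ≥ n₀ and all j ∈ {0, …, n}: |∫_{−1}^{x_{n,j}^{(α)}} f(x) dx − Σ_{i=0}^{n} p_{B,j,i} f(x_{n,i}^{(α)})| ≤ B · (e/2)^n · (x_{n,j}^{(α)} + 1) · n^{α − n − 3/2}. -/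
open Set Polynomial Finset

lemma myUD : UniqueDiffOn ℝ (Set.Icc (-1:ℝ) 1) := uniqueDiffOn_Icc (by norm_num)

lemma iterRolle (m : ℕ) : ∀ (F : ℝ → ℝ), ContDiffOn ℝ (⊤:ℕ∞) F (Set.Icc (-1:ℝ) 1) →
    ∀ (ts : Fin (m+1) → ℝ), StrictMono ts → (∀ i, ts i ∈ Set.Icc (-1:ℝ) 1) → (∀ i, F (ts i) = 0) →
    ∃ ξ ∈ Set.Icc (-1:ℝ) 1, iteratedDerivWithin m F (Set.Icc (-1:ℝ) 1) ξ = 0 := by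
  induction m with
  | zero =>
    intro F hF ts hmono hmem hz
    exact ⟨ts 0, hmem 0, by simpa using hz 0⟩
  | succ m IH =>
    intro F hF ts hmono hmem hz
    set F' := derivWithin F (Set.Icc (-1:ℝ) 1) with hF'def
    have hch : ∀ i : Fin (m+1), ∃ c, c ∈ Set.Ioo (ts i.castSucc) (ts i.succ) ∧ deriv F c = 0 := by
      intro i
      have hlt : ts i.castSucc < ts i.succ := hmono (Fin.castSucc_lt_succ (i := i))
      have hsub : Set.Icc (ts i.castSucc) (ts i.succ) ⊆ Set.Icc (-1:ℝ) 1 :=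
        Set.Icc_subset_Icc (hmem i.castSucc).1 (hmem i.succ).2
      obtain ⟨c, hc, hc0⟩ := exists_deriv_eq_zero hlt (hF.continuousOn.mono hsub)
        (by rw [hz i.castSucc, hz i.succ])
      exact ⟨c, hc, hc0⟩
    choose c hc1 hc2 using hch
    have hcIoo : ∀ i, c i ∈ Set.Ioo (-1:ℝ) 1 := by
      intro i
      constructor
      · exact lt_of_le_of_lt (hmem i.castSucc).1 (hc1 i).1
      · exact lt_of_lt_of_le (hc1 i).2 (hmem i.succ).2
    have hcmono : StrictMono c := by
      intro i j hij
      have h1 : c i < ts i.succ := (hc1 i).2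
      have h2 : ts j.castSucc < c j := (hc1 j).1
      have h3 : ts i.succ ≤ ts j.castSucc := by
        apply hmono.monotone
        have hv : i.val < j.val := hij
        rw [Fin.le_def, Fin.val_succ, Fin.coe_castSucc]
        omega
      linarith
    have hF'c : ContDiffOn ℝ (⊤:ℕ∞) F' (Set.Icc (-1:ℝ) 1) := by
      apply hF.derivWithin myUD
      exact_mod_cast le_top
    have hF'z : ∀ i, F' (c i) = 0 := by
      intro i
      rw [hF'def, derivWithin_of_mem_nhds (Icc_mem_nhds (hcIoo i).1 (hcIoo i).2)]
      exact hc2 i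
    obtain ⟨ξ, hξ, hξ0⟩ := IH F' hF'c c hcmono (fun i => Set.Ioo_subset_Icc_self (hcIoo i)) hF'z
    refine ⟨ξ, hξ, ?_⟩
    rw [iteratedDerivWithin_succ']
    exact hξ0

lemma polyIDW (k : ℕ) : ∀ (q : Polynomial ℝ), ∀ x ∈ Set.Icc (-1:ℝ) 1,
    iteratedDerivWithin k (fun s => q.eval s) (Set.Icc (-1:ℝ) 1) x
      = ((Polynomial.derivative)^[k] q).eval x := by
  induction k with
  | zero => intro q x hx; simp
  | succ k IH =>
    intro q x hx
    rw [iteratedDerivWithin_succ']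
    have hcongr : Set.EqOn (derivWithin (fun s => q.eval s) (Set.Icc (-1:ℝ) 1))
        (fun s => q.derivative.eval s) (Set.Icc (-1:ℝ) 1) := by
      intro y hy
      exact ((q.hasDerivAt y).hasDerivWithinAt).derivWithin (myUD y hy)
    rw [iteratedDerivWithin_congr (n := k) hcongr hx, IH q.derivative x hx,
      ← Function.iterate_succ_apply]

lemma polyCD (p : Polynomial ℝ) : ContDiff ℝ (⊤:ℕ∞) fun s : ℝ => p.eval s := by
  induction p using Polynomial.induction_on' with
  | add p q hp hq => simpa [Polynomial.eval_add] using hp.add hq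
  | monomial k a => simpa [Polynomial.eval_monomial] using (contDiff_const.mul (contDiff_id.pow k))

lemma interpError (n : ℕ) (f : ℝ → ℝ) (hf : ContDiffOn ℝ (⊤:ℕ∞) f (Set.Icc (-1:ℝ) 1))
    (A : ℝ) (hbA : ∀ s ∈ Set.Icc (-1:ℝ) 1, |iteratedDerivWithin (n+1) f (Set.Icc (-1:ℝ) 1) s| ≤ A)
    (x : Fin (n+1) → ℝ) (hinj : Function.Injective x) (hxm : ∀ i, x i ∈ Set.Icc (-1:ℝ) 1)
    (P : Polynomial ℝ) (hP : P.natDegree ≤ n) (hPv : ∀ i, P.eval (x i) = f (x i))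
    (t : ℝ) (ht : t ∈ Set.Icc (-1:ℝ) 1) :
    |f t - P.eval t| ≤ A / (n+1).factorial * |∏ i, (t - x i)| := by
  have hA0 : 0 ≤ A := le_trans (abs_nonneg _) (hbA t ht)
  by_cases hnode : ∃ i, t = x i
  · obtain ⟨i, rfl⟩ := hnode
    rw [hPv i, sub_self, abs_zero]
    positivity
  · push_neg at hnode
    have hNeval : ∀ s : ℝ, (∏ i, (X - C (x i)) : Polynomial ℝ).eval s = ∏ i, (s - x i) := by
      intro s; simp [Polynomial.eval_prod]
    set N : Polynomial ℝ := ∏ i, (X - C (x i)) with hNdef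
    have hNT0 : N.eval t ≠ 0 := by
      rw [hNeval]
      exact Finset.prod_ne_zero_iff.2 fun i _ => sub_ne_zero.2 (hnode i)
    set q : Polynomial ℝ := C (-(N.eval t)) * P + C (-(f t - P.eval t)) * N with hq
    set φ : ℝ → ℝ := fun s => N.eval t * f s + q.eval s with hφ
    -- zero set
    set s0 : Finset ℝ := insert t (Finset.image x Finset.univ) with hs0
    have htni : t ∉ Finset.image x Finset.univ := by
      simp only [Finset.mem_image]
      rintro ⟨i, -, hi⟩; exact hnode i hi.symm
    have hcard : s0.card = n + 2 := by
      rw [hs0, Finset.card_insert_of_notMem htni, Finset.card_image_of_injective _ hinj]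
      simp
    set ts : Fin (n+2) → ℝ := fun i => ((s0.orderIsoOfFin hcard) i : ℝ) with hts
    have htsmono : StrictMono ts := fun i j hij => (s0.orderIsoOfFin hcard).strictMono hij
    have htsmem : ∀ i, ts i ∈ s0 := fun i => ((s0.orderIsoOfFin hcard) i).2
    have hmemIcc : ∀ i, ts i ∈ Set.Icc (-1:ℝ) 1 := by
      intro i
      have := htsmem i
      rw [hs0, Finset.mem_insert] at this
      rcases this with h | h
      · rwa [h]
      · obtain ⟨j, -, hj⟩ := Finset.mem_image.1 h
        rw [← hj]; exact hxm j
    have hφz : ∀ i, φ (ts i) = 0 := by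
      intro i
      have := htsmem i
      rw [hs0, Finset.mem_insert] at this
      rcases this with h | h
      · rw [hφ, h]
        simp only [hq, eval_add, eval_mul, eval_C]
        ring
      · obtain ⟨j, -, hj⟩ := Finset.mem_image.1 h
        rw [hφ, ← hj]
        simp only [hq, eval_add, eval_mul, eval_C]
        have hNj : N.eval (x j) = 0 := by
          rw [hNdef, hNeval]
          exact Finset.prod_eq_zero (Finset.mem_univ j) (by simp)
        rw [hNj, hPv j]
        ring
    have hφc : ContDiffOn ℝ (⊤:ℕ∞) φ (Set.Icc (-1:ℝ) 1) := by
      apply ContDiffOn.add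
      · exact ContDiffOn.mul contDiffOn_const hf
      · exact (polyCD q).contDiffOn
    obtain ⟨ξ, hξ, hξ0⟩ := iterRolle (n+1) φ hφc ts htsmono hmemIcc hφz
    -- compute iterated derivative of φ at ξ
    have hNmonic : N.Monic := monic_prod_of_monic _ _ fun i _ => monic_X_sub_C (x i)
    have hNdeg : N.natDegree = n + 1 := by
      rw [hNdef, Polynomial.natDegree_prod_of_monic _ _ fun i _ => monic_X_sub_C (x i)]
      simp
    have hderN : (Polynomial.derivative)^[n+1] N = C (((n+1).factorial : ℝ)) := by
      have hdeg0 : ((Polynomial.derivative)^[n+1] N).natDegree ≤ 0 := by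
        have := Polynomial.natDegree_iterate_derivative N (n+1)
        omega
      rw [Polynomial.eq_C_of_natDegree_le_zero hdeg0]
      congr 1
      rw [Polynomial.coeff_iterate_derivative N 0, Nat.zero_add]
      have h1 : N.coeff (n+1) = 1 := by
        rw [← hNdeg]; exact hNmonic.coeff_natDegree
      rw [h1, Nat.descFactorial_self]
      simp
    have hderP : (Polynomial.derivative)^[n+1] P = 0 :=
      Polynomial.iterate_derivative_eq_zero (lt_of_le_of_lt hP (Nat.lt_succ_self n))
    have hderq : (Polynomial.derivative)^[n+1] q
        = C (-(f t - P.eval t) * ((n+1).factorial : ℝ)) := by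
      rw [hq, iterate_map_add, Polynomial.iterate_derivative_C_mul,
        Polynomial.iterate_derivative_C_mul, hderP, hderN, ← Polynomial.C_mul]
      simp
    -- expand the iterated derivative
    have hsplit : iteratedDerivWithin (n+1) φ (Set.Icc (-1:ℝ) 1) ξ
        = N.eval t * iteratedDerivWithin (n+1) f (Set.Icc (-1:ℝ) 1) ξ
          - (f t - P.eval t) * ((n+1).factorial : ℝ) := by
      have h1 : φ = ((N.eval t) • f) + (fun s => q.eval s) := by
        funext s; simp [hφ, smul_eq_mul]
      rw [h1, iteratedDerivWithin_add (n := n+1) (f := (N.eval t) • f) (g := fun s => q.eval s) hξ myUD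
        (((hf.const_smul (N.eval t)).contDiffWithinAt hξ).of_le (by exact_mod_cast le_top))
        (((polyCD q).contDiffOn.contDiffWithinAt hξ).of_le (by exact_mod_cast le_top))]
      rw [iteratedDerivWithin_const_smul (n := n+1) hξ myUD (N.eval t) ((hf.contDiffWithinAt hξ).of_le (by exact_mod_cast le_top))]
      rw [polyIDW (n+1) q ξ hξ, hderq]
      simp [smul_eq_mul]
      ring
    rw [hsplit] at hξ0
    have hfac : (0:ℝ) < ((n+1).factorial : ℝ) := by positivity
    have habs : |f t - P.eval t| * ((n+1).factorial : ℝ)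
        = |N.eval t| * |iteratedDerivWithin (n+1) f (Set.Icc (-1:ℝ) 1) ξ| := by
      have hkey : (f t - P.eval t) * ((n+1).factorial : ℝ)
          = N.eval t * iteratedDerivWithin (n+1) f (Set.Icc (-1:ℝ) 1) ξ := by linarith
      calc |f t - P.eval t| * ((n+1).factorial : ℝ)
          = |f t - P.eval t| * |((n+1).factorial : ℝ)| := by
            rw [abs_of_nonneg (le_of_lt hfac)]
        _ = |(f t - P.eval t) * ((n+1).factorial : ℝ)| := (abs_mul _ _).symm
        _ = |N.eval t * iteratedDerivWithin (n+1) f (Set.Icc (-1:ℝ) 1) ξ| := by rw [hkey]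
        _ = _ := abs_mul _ _
    have hbd : |f t - P.eval t| * ((n+1).factorial : ℝ) ≤ |N.eval t| * A := by
      rw [habs]
      exact mul_le_mul_of_nonneg_left (hbA ξ hξ) (abs_nonneg _)
    have hgoal : |∏ i, (t - x i)| = |N.eval t| := by rw [hNdef, hNeval]
    rw [hgoal, div_mul_eq_mul_div, le_div_iff₀ hfac, mul_comm A]
    linarith

noncomputable def aseq (α : ℝ) : ℕ → ℝ
  | 0 => 1
  | k+1 => aseq α k * ((α + k) / (k+1))

noncomputable def Ssum (α : ℝ) (n : ℕ) (θ : ℝ) : ℝ :=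
  ∑ j ∈ Finset.range (n+1), aseq α j * aseq α (n-j) * Real.cos (((n:ℝ) - 2*j) * θ)

noncomputable def gsum (α : ℝ) (n : ℕ) : ℝ :=
  ∑ j ∈ Finset.range (n+1), aseq α j * aseq α (n-j)

lemma aseq_pos {α : ℝ} (hα : 0 < α) : ∀ k, 0 < aseq α k := by
  intro k
  induction k with
  | zero => norm_num [aseq]
  | succ k ih =>
    rw [aseq]
    have h1 : (0:ℝ) < α + k := by positivity
    have h2 : (0:ℝ) < (k:ℝ) + 1 := by positivity
    positivity

lemma gsum_pos {α : ℝ} (hα : 0 < α) (n : ℕ) : 0 < gsum α n := by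
  apply Finset.sum_pos
  · intro j hj; exact mul_pos (aseq_pos hα j) (aseq_pos hα _)
  · exact ⟨0, Finset.mem_range.2 (Nat.succ_pos n)⟩

lemma Ssum_zero (α : ℝ) (n : ℕ) : Ssum α n 0 = gsum α n := by
  unfold Ssum gsum
  apply Finset.sum_congr rfl
  intro j hj
  rw [mul_zero, Real.cos_zero, mul_one]

lemma Ssum_abs_le {α : ℝ} (hα : 0 < α) (n : ℕ) (θ : ℝ) : |Ssum α n θ| ≤ gsum α n := by
  unfold Ssum gsum
  refine le_trans (Finset.abs_sum_le_sum_abs _ _) (Finset.sum_le_sum ?_)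
  intro j hj
  rw [abs_mul, abs_mul]
  rw [abs_of_pos (aseq_pos hα j), abs_of_pos (aseq_pos hα _)]
  have h1 : |Real.cos (((n:ℝ) - 2*j) * θ)| ≤ 1 := Real.abs_cos_le_one _
  have hp : 0 ≤ aseq α j * aseq α (n-j) :=
    le_of_lt (mul_pos (aseq_pos hα j) (aseq_pos hα _))
  exact mul_le_of_le_one_right hp h1

lemma aseq_succ (α : ℝ) (k : ℕ) : aseq α (k+1) = aseq α k * ((α + k) / ((k:ℝ)+1)) := rfl

lemma keyId (α : ℝ) (m : ℕ) (θ : ℝ) :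
    ((m:ℝ)+2) * Ssum α (m+2) θ
      = 2*((m:ℝ)+1+α) * Real.cos θ * Ssum α (m+1) θ - ((m:ℝ)+2*α) * Ssum α m θ := by
  have e1 : ∑ j ∈ Finset.range (m+3),
      (if j = m+2 then 0 else aseq α j * aseq α (m+1-j) * Real.cos (((m:ℝ)+2-2*j)*θ))
      = ∑ j ∈ Finset.range (m+2), aseq α j * aseq α (m+1-j) * Real.cos (((m:ℝ)+2-2*j)*θ) := by
    rw [Finset.sum_range_succ, if_pos rfl, add_zero]
    apply Finset.sum_congr rfl
    intro j hj
    rw [if_neg (by rw [Finset.mem_range] at hj; omega)]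
  have e2 : ∑ j ∈ Finset.range (m+3),
      (if j = 0 then 0 else aseq α (j-1) * aseq α (m+2-j) * Real.cos (((m:ℝ)+2-2*j)*θ))
      = ∑ j ∈ Finset.range (m+2), aseq α j * aseq α (m+1-j) * Real.cos (((m:ℝ)-2*j)*θ) := by
    rw [Finset.sum_range_succ']
    rw [if_pos rfl, add_zero]
    apply Finset.sum_congr rfl
    intro j hj
    rw [if_neg (Nat.succ_ne_zero j)]
    have h1 : j + 1 - 1 = j := rfl
    have h2 : m + 2 - (j+1) = m + 1 - j := by omega
    rw [h1, h2]
    congr 2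
    push_cast
    ring
  have e3 : ∑ j ∈ Finset.range (m+3),
      (if j = 0 ∨ j = m+2 then 0 else aseq α (j-1) * aseq α (m+1-j) * Real.cos (((m:ℝ)+2-2*j)*θ))
      = Ssum α m θ := by
    rw [Finset.sum_range_succ']
    rw [if_pos (Or.inl rfl), add_zero]
    rw [Finset.sum_range_succ]
    rw [if_pos (Or.inr rfl), add_zero]
    unfold Ssum
    apply Finset.sum_congr rfl
    intro j hj
    rw [Finset.mem_range] at hj
    rw [if_neg (by omega)]
    have h1 : j + 1 - 1 = j := rfl
    have h2 : m + 1 - (j+1) = m - j := by omega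
    rw [h1, h2]
    congr 2
    push_cast
    ring
  have e4 : ∀ j ∈ Finset.range (m+3),
      ((m:ℝ)+2) * (aseq α j * aseq α (m+2-j) * Real.cos (((m:ℝ)+2-2*j)*θ))
      = ((m:ℝ)+1+α) * (if j = m+2 then 0 else aseq α j * aseq α (m+1-j) * Real.cos (((m:ℝ)+2-2*j)*θ))
      + ((m:ℝ)+1+α) * (if j = 0 then 0 else aseq α (j-1) * aseq α (m+2-j) * Real.cos (((m:ℝ)+2-2*j)*θ))
      - ((m:ℝ)+2*α) * (if j = 0 ∨ j = m+2 then 0 else aseq α (j-1) * aseq α (m+1-j) * Real.cos (((m:ℝ)+2-2*j)*θ)) := by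
    intro j hj
    rw [Finset.mem_range] at hj
    rcases eq_or_ne j 0 with rfl | hj0
    · rw [if_neg (by omega), if_pos rfl, if_pos (Or.inl rfl)]
      have h1 : m + 2 - 0 = (m+1) + 1 := by omega
      have h2 : m + 1 - 0 = m + 1 := rfl
      rw [h1, h2]
      rw [aseq_succ α (m+1)]
      push_cast
      have : ((m:ℝ) + 1 + 1) ≠ 0 := by positivity
      field_simp
      ring
    · rcases eq_or_ne j (m+2) with rfl | hjm
      · rw [if_pos rfl, if_neg hj0, if_pos (Or.inr rfl)]
        have h1 : m + 2 - (m+2) = 0 := by omega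
        have h2 : m + 2 - 1 = m + 1 := by omega
        rw [h1, h2]
        rw [show m + 2 = (m+1)+1 from rfl, aseq_succ α (m+1)]
        have h0 : aseq α 0 = 1 := rfl
        rw [h0]
        push_cast
        have : ((m:ℝ) + 1 + 1) ≠ 0 := by positivity
        field_simp
        ring
      · -- middle case : 1 ≤ j ≤ m+1
        rw [if_neg hjm, if_neg hj0, if_neg (by push_neg; exact ⟨hj0, hjm⟩)]
        have hj1 : 1 ≤ j := Nat.one_le_iff_ne_zero.2 hj0
        have hjle : j ≤ m + 1 := by omega
        have hja : aseq α j = aseq α (j-1) * ((α + ((j-1:ℕ):ℝ))/(((j-1:ℕ):ℝ)+1)) := by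
          conv_lhs => rw [show j = (j-1)+1 by omega]
          exact aseq_succ α (j-1)
        have hjb : aseq α (m+2-j)
            = aseq α (m+1-j) * ((α + ((m+1-j:ℕ):ℝ))/(((m+1-j:ℕ):ℝ)+1)) := by
          conv_lhs => rw [show m+2-j = (m+1-j)+1 by omega]
          exact aseq_succ α (m+1-j)
        have c1 : ((j-1 : ℕ) : ℝ) = (j:ℝ) - 1 := by
          push_cast [Nat.cast_sub hj1]; ring
        have c2 : ((m+1-j : ℕ) : ℝ) = (m:ℝ) + 1 - j := by
          push_cast [Nat.cast_sub hjle]; ring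
        rw [hja, hjb, c1, c2]
        have hJ : ((j:ℝ) - 1) + 1 ≠ 0 := by
          have : (1:ℝ) ≤ (j:ℝ) := by exact_mod_cast hj1
          intro h; nlinarith
        have hMJ : ((m:ℝ) + 1 - j) + 1 ≠ 0 := by
          have : (j:ℝ) ≤ (m:ℝ) + 1 := by exact_mod_cast hjle
          intro h; nlinarith
        field_simp
        ring
  have e5 : 2 * Real.cos θ * Ssum α (m+1) θ
      = (∑ j ∈ Finset.range (m+2), aseq α j * aseq α (m+1-j) * Real.cos (((m:ℝ)+2-2*j)*θ))
      + ∑ j ∈ Finset.range (m+2), aseq α j * aseq α (m+1-j) * Real.cos (((m:ℝ)-2*j)*θ) := by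
    unfold Ssum
    rw [Finset.mul_sum, ← Finset.sum_add_distrib]
    apply Finset.sum_congr rfl
    intro j hj
    have t1 : (((m+1:ℕ):ℝ) - 2*j) * θ + θ = ((m:ℝ)+2-2*j)*θ := by push_cast; ring
    have t2 : (((m+1:ℕ):ℝ) - 2*j) * θ - θ = ((m:ℝ)-2*j)*θ := by push_cast; ring
    have := Real.cos_add ((((m+1:ℕ):ℝ) - 2*j) * θ) θ
    have h2 := Real.cos_sub ((((m+1:ℕ):ℝ) - 2*j) * θ) θ
    rw [t1] at this
    rw [t2] at h2
    linear_combination (-(aseq α j * aseq α (m+1-j))) * this + (-(aseq α j * aseq α (m+1-j))) * h2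
  have main : ((m:ℝ)+2) * Ssum α (m+2) θ
      = ∑ j ∈ Finset.range (m+3), ((m:ℝ)+2) * (aseq α j * aseq α (m+2-j) * Real.cos (((m:ℝ)+2-2*j)*θ)) := by
    unfold Ssum
    rw [Finset.mul_sum]
    apply Finset.sum_congr rfl
    intro j hj
    congr 2
    push_cast
    ring
  rw [main, Finset.sum_congr rfl e4]
  rw [show (∑ j ∈ Finset.range (m+3),
      (((m:ℝ)+1+α) * (if j = m+2 then 0 else aseq α j * aseq α (m+1-j) * Real.cos (((m:ℝ)+2-2*j)*θ))
      + ((m:ℝ)+1+α) * (if j = 0 then 0 else aseq α (j-1) * aseq α (m+2-j) * Real.cos (((m:ℝ)+2-2*j)*θ))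
      - ((m:ℝ)+2*α) * (if j = 0 ∨ j = m+2 then 0 else aseq α (j-1) * aseq α (m+1-j) * Real.cos (((m:ℝ)+2-2*j)*θ))))
      = ((m:ℝ)+1+α) * (∑ j ∈ Finset.range (m+3), (if j = m+2 then 0 else aseq α j * aseq α (m+1-j) * Real.cos (((m:ℝ)+2-2*j)*θ)))
      + ((m:ℝ)+1+α) * (∑ j ∈ Finset.range (m+3), (if j = 0 then 0 else aseq α (j-1) * aseq α (m+2-j) * Real.cos (((m:ℝ)+2-2*j)*θ)))
      - ((m:ℝ)+2*α) * (∑ j ∈ Finset.range (m+3), (if j = 0 ∨ j = m+2 then 0 else aseq α (j-1) * aseq α (m+1-j) * Real.cos (((m:ℝ)+2-2*j)*θ)))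
      from by rw [Finset.sum_sub_distrib, Finset.sum_add_distrib, Finset.mul_sum, Finset.mul_sum, Finset.mul_sum]]
  rw [e1, e2, e3]
  linear_combination (-(((m:ℝ)+1+α))) * e5

lemma gsum_zero (α : ℝ) : gsum α 0 = 1 := by simp [gsum, aseq]

lemma gratio (α : ℝ) : ∀ k : ℕ, ((k:ℝ)+1) * gsum α (k+1) = ((k:ℝ)+2*α) * gsum α k := by
  intro k
  induction k with
  | zero =>
    have h1 : gsum α 1 = 2 * α := by
      simp [gsum, Finset.sum_range_succ, aseq]
      ring
    rw [h1, gsum_zero]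
    norm_num
  | succ k ih =>
    have hk := keyId α k 0
    rw [Ssum_zero, Ssum_zero, Ssum_zero, Real.cos_zero] at hk
    push_cast
    linarith

lemma Sg {α : ℝ} (hα : 0 < α) (G : ℕ → Polynomial ℝ)
    (hG0 : G 0 = 1) (hG1 : G 1 = Polynomial.X)
    (hGrec : ∀ k : ℕ, 1 ≤ k →
      Polynomial.C ((k : ℝ) + 2 * α) * G (k + 1) =
        Polynomial.C (2 * ((k : ℝ) + α)) * (Polynomial.X * G k) -
          Polynomial.C (k : ℝ) * G (k - 1)) :
    ∀ n θ, (G n).eval (Real.cos θ) * gsum α n = Ssum α n θ := by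
  intro n
  induction n using Nat.strong_induction_on with
  | _ n ih =>
    obtain _ | _ | k := n
    · intro θ
      simp [hG0, gsum_zero, Ssum, aseq]
    · intro θ
      have h1 : gsum α 1 = 2 * α := by
        simp [gsum, Finset.sum_range_succ, aseq]; ring
      have h2 : Ssum α 1 θ = 2 * α * Real.cos θ := by
        simp [Ssum, Finset.sum_range_succ, aseq]
        have e1 : ((1:ℝ) - 2) * θ = -θ := by ring
        rw [e1, Real.cos_neg]
        ring
      rw [hG1, h1, h2]
      simp
      ring
    · intro θ
      have hrec := hGrec (k+1) (by omega)
      have h1 := congrArg (Polynomial.eval (Real.cos θ)) hrec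
      simp only [Polynomial.eval_mul, Polynomial.eval_sub, Polynomial.eval_C,
        Polynomial.eval_X, Nat.add_sub_cancel] at h1
      push_cast at h1
      have hP1 := ih (k+1) (by omega) θ
      have hP0 := ih k (by omega) θ
      have h2 := keyId α k θ
      have h3 := gratio α k
      have h4 := gratio α (k+1)
      push_cast at h4
      have hg0 : gsum α k ≠ 0 := (gsum_pos hα k).ne'
      have i1 : gsum α k * (((k:ℝ)+1+2*α) * ((G (k+2)).eval (Real.cos θ) * gsum α (k+1)))
          = gsum α k * (((k:ℝ)+2) * Ssum α (k+2) θ) := by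
        linear_combination (gsum α k * gsum α (k+1)) * h1
          + (2*((k:ℝ)+1+α)*Real.cos θ*gsum α k) * hP1
          - (((k:ℝ)+1)*gsum α (k+1)) * hP0
          - gsum α k * h2 - Ssum α k θ * h3
      have i2 := mul_left_cancel₀ hg0 i1
      have hK2 : ((k:ℝ)+2) ≠ 0 := by positivity
      have i3 : ((k:ℝ)+2) * ((G (k+2)).eval (Real.cos θ) * gsum α (k+2))
          = ((k:ℝ)+2) * Ssum α (k+2) θ := by
        linear_combination (G (k+2)).eval (Real.cos θ) * h4 + i2
      exact mul_left_cancel₀ hK2 i3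

lemma chebEval (G : ℕ → Polynomial ℝ)
    (hG0 : G 0 = 1) (hG1 : G 1 = Polynomial.X)
    (hGrec : ∀ k : ℕ, 1 ≤ k →
      Polynomial.C ((k : ℝ) + 2 * 0) * G (k + 1) =
        Polynomial.C (2 * ((k : ℝ) + 0)) * (Polynomial.X * G k) -
          Polynomial.C (k : ℝ) * G (k - 1)) :
    ∀ n θ, (G n).eval (Real.cos θ) = Real.cos ((n:ℝ) * θ) := by
  intro n
  induction n using Nat.strong_induction_on with
  | _ n ih =>
    obtain _ | _ | k := n
    · intro θ; simp [hG0]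
    · intro θ; simp [hG1]
    · intro θ
      have hrec := hGrec (k+1) (by omega)
      have h1 := congrArg (Polynomial.eval (Real.cos θ)) hrec
      simp only [Polynomial.eval_mul, Polynomial.eval_sub, Polynomial.eval_C,
        Polynomial.eval_X, Nat.add_sub_cancel] at h1
      rw [ih (k+1) (by omega) θ, ih k (by omega) θ] at h1
      push_cast at h1
      have hK : ((k:ℝ)+1) ≠ 0 := by positivity
      have ht1 := Real.cos_add (((k:ℝ)+1)*θ) θ
      have ht2 := Real.cos_sub (((k:ℝ)+1)*θ) θ
      have e1 : ((k:ℝ)+1)*θ + θ = ((k:ℝ)+2)*θ := by ring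
      have e2 : ((k:ℝ)+1)*θ - θ = (k:ℝ)*θ := by ring
      rw [e1] at ht1
      rw [e2] at ht2
      have goal1 : ((k:ℝ)+1) * (G (k+2)).eval (Real.cos θ)
          = ((k:ℝ)+1) * Real.cos (((k:ℝ)+2)*θ) := by
        linear_combination h1 - ((k:ℝ)+1) * ht1 - ((k:ℝ)+1) * ht2
      have hfin := mul_left_cancel₀ hK goal1
      rw [hfin]
      congr 1
      push_cast
      ring

lemma Gbdd {α : ℝ} (hα : 0 ≤ α) (G : ℕ → Polynomial ℝ)
    (hG0 : G 0 = 1) (hG1 : G 1 = Polynomial.X)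
    (hGrec : ∀ k : ℕ, 1 ≤ k →
      Polynomial.C ((k : ℝ) + 2 * α) * G (k + 1) =
        Polynomial.C (2 * ((k : ℝ) + α)) * (Polynomial.X * G k) -
          Polynomial.C (k : ℝ) * G (k - 1)) :
    ∀ n, ∀ t ∈ Set.Icc (-1:ℝ) 1, |(G n).eval t| ≤ 1 := by
  intro n t ht
  have hct : t = Real.cos (Real.arccos t) := (Real.cos_arccos ht.1 ht.2).symm
  rcases eq_or_lt_of_le hα with heq | hpos
  · subst heq
    rw [hct, chebEval G hG0 hG1 hGrec n (Real.arccos t)]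
    exact Real.abs_cos_le_one _
  · rw [hct]
    have h1 := Sg hpos G hG0 hG1 hGrec n (Real.arccos t)
    have h2 := Ssum_abs_le hpos n (Real.arccos t)
    rw [← h1, abs_mul, abs_of_pos (gsum_pos hpos n)] at h2
    have h3 := gsum_pos hpos n
    exact le_of_mul_le_mul_right (by simpa using h2) h3

noncomputable def lam (α : ℝ) : ℕ → ℝ
  | 0 => 1
  | 1 => 1
  | (k+2) => (2*(((k:ℝ)+1)+α)/(((k:ℝ)+1)+2*α)) * lam α (k+1)

lemma lam_pos {α : ℝ} (hα : 0 ≤ α) : ∀ k, 0 < lam α k := by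
  intro k
  induction k using Nat.strong_induction_on with
  | _ k ih =>
    obtain _ | _ | k := k
    · norm_num [lam]
    · norm_num [lam]
    · rw [lam]
      have h1 : (0:ℝ) < (k:ℝ)+1+α := by positivity
      have h2 : (0:ℝ) < (k:ℝ)+1+2*α := by positivity
      have h3 := ih (k+1) (by omega)
      positivity

lemma Gdeg {α : ℝ} (hα : 0 ≤ α) (G : ℕ → Polynomial ℝ)
    (hG0 : G 0 = 1) (hG1 : G 1 = Polynomial.X)
    (hGrec : ∀ k : ℕ, 1 ≤ k →
      Polynomial.C ((k : ℝ) + 2 * α) * G (k + 1) =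
        Polynomial.C (2 * ((k : ℝ) + α)) * (Polynomial.X * G k) -
          Polynomial.C (k : ℝ) * G (k - 1)) :
    ∀ k, (G k).natDegree = k ∧ (G k).leadingCoeff = lam α k := by
  intro k
  induction k using Nat.strong_induction_on with
  | _ k ih =>
    obtain _ | _ | k := k
    · rw [hG0]; constructor <;> simp [lam]
    · rw [hG1]; constructor <;> simp [lam]
    · obtain ⟨hd1, hl1⟩ := ih (k+1) (by omega)
      obtain ⟨hd0, hl0⟩ := ih k (by omega)
      have hrec := hGrec (k+1) (by omega)
      rw [Nat.add_sub_cancel] at hrec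
      have hG1ne : G (k+1) ≠ 0 := by
        rw [← Polynomial.leadingCoeff_ne_zero, hl1]
        exact (lam_pos hα (k+1)).ne'
      have hc1 : (2 * ((↑(k+1):ℝ) + α)) ≠ 0 := by push_cast; positivity
      have hcL : ((↑(k+1):ℝ) + 2*α) ≠ 0 := by push_cast; positivity
      have hq1deg : (Polynomial.C (2 * ((↑(k+1):ℝ) + α)) * (Polynomial.X * G (k+1))).natDegree
          = k + 2 := by
        rw [Polynomial.natDegree_C_mul hc1, Polynomial.natDegree_mul Polynomial.X_ne_zero hG1ne,
          Polynomial.natDegree_X, hd1]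
        omega
      have hq1lc : (Polynomial.C (2 * ((↑(k+1):ℝ) + α)) * (Polynomial.X * G (k+1))).leadingCoeff
          = 2 * ((↑(k+1):ℝ) + α) * lam α (k+1) := by
        rw [Polynomial.leadingCoeff_mul, Polynomial.leadingCoeff_mul,
          Polynomial.leadingCoeff_C, Polynomial.leadingCoeff_X, hl1]
        ring
      have hq2deg : (Polynomial.C ((↑(k+1):ℝ)) * G k).natDegree < k + 2 := by
        apply lt_of_le_of_lt (Polynomial.natDegree_mul_le)
        rw [Polynomial.natDegree_C, hd0]
        omega
      have hddlt : (Polynomial.C ((↑(k+1):ℝ)) * G k).degree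
          < (Polynomial.C (2 * ((↑(k+1):ℝ) + α)) * (Polynomial.X * G (k+1))).degree := by
        apply Polynomial.degree_lt_degree
        omega
      have hsubdeg : (Polynomial.C (2 * ((↑(k+1):ℝ) + α)) * (Polynomial.X * G (k+1))
          - Polynomial.C ((↑(k+1):ℝ)) * G k).natDegree = k + 2 := by
        rw [Polynomial.natDegree_sub_eq_left_of_natDegree_lt (by omega), hq1deg]
      have hsublc : (Polynomial.C (2 * ((↑(k+1):ℝ) + α)) * (Polynomial.X * G (k+1))
          - Polynomial.C ((↑(k+1):ℝ)) * G k).leadingCoeff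
          = 2 * ((↑(k+1):ℝ) + α) * lam α (k+1) := by
        rw [Polynomial.leadingCoeff_sub_of_degree_lt hddlt, hq1lc]
      constructor
      · have := congrArg Polynomial.natDegree hrec
        rw [Polynomial.natDegree_C_mul hcL, hsubdeg] at this
        exact this
      · have := congrArg Polynomial.leadingCoeff hrec
        rw [Polynomial.leadingCoeff_mul, Polynomial.leadingCoeff_C, hsublc] at this
        have hlam : lam α (k+2) = (2*(((k:ℝ)+1)+α)/(((k:ℝ)+1)+2*α)) * lam α (k+1) := rfl
        have goal2 : ((↑(k+1):ℝ) + 2*α) * (G (k+2)).leadingCoeff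
            = ((↑(k+1):ℝ) + 2*α) * lam α (k+2) := by
          rw [this, hlam]
          push_cast
          field_simp
        exact mul_left_cancel₀ hcL goal2

lemma lamProd (α : ℝ) : ∀ n, lam α (n+1) = ∏ k ∈ Finset.range n, (2*(((k:ℝ)+1)+α)/(((k:ℝ)+1)+2*α)) := by
  intro n
  induction n with
  | zero => simp [lam]
  | succ n ih =>
    rw [Finset.prod_range_succ, ← ih]
    conv_rhs => rw [mul_comm]
    rfl

lemma lamLB {α : ℝ} (hα : 0 ≤ α) (n : ℕ) (hn : 1 ≤ n) :
    2^n * Real.exp (-α) * (n:ℝ)^(-α) ≤ lam α (n+1) := by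
  rw [lamProd]
  have hfac : ∀ k ∈ Finset.range n, 2 * Real.exp (-(α/((k:ℝ)+1)))
      ≤ 2*(((k:ℝ)+1)+α)/(((k:ℝ)+1)+2*α) := by
    intro k _
    have hu : (0:ℝ) < (k:ℝ)+1 := by positivity
    have h2 : (0:ℝ) < (k:ℝ)+1+α := by positivity
    have h3 : (0:ℝ) < (k:ℝ)+1+2*α := by positivity
    have e1 : α/(((k:ℝ)+1)+α) + 1 ≤ Real.exp (α/(((k:ℝ)+1)+α)) := Real.add_one_le_exp _
    have e2 : (((k:ℝ)+1)+2*α)/(((k:ℝ)+1)+α) ≤ Real.exp (α/(((k:ℝ)+1)+α)) := by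
      have : (((k:ℝ)+1)+2*α)/(((k:ℝ)+1)+α) = α/(((k:ℝ)+1)+α) + 1 := by
        field_simp
        ring
      rw [this]; exact e1
    have e3 : Real.exp (-(α/((k:ℝ)+1))) ≤ Real.exp (-(α/(((k:ℝ)+1)+α))) := by
      apply Real.exp_le_exp.2
      apply neg_le_neg
      exact div_le_div_of_nonneg_left hα hu (by linarith)
    have e4 : Real.exp (-(α/(((k:ℝ)+1)+α))) ≤ (((k:ℝ)+1)+α)/(((k:ℝ)+1)+2*α) := by
      rw [Real.exp_neg]
      have hpos : (0:ℝ) < (((k:ℝ)+1)+2*α)/(((k:ℝ)+1)+α) := by positivity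
      have := inv_anti₀ hpos e2
      rwa [inv_div] at this
    calc 2 * Real.exp (-(α/((k:ℝ)+1))) ≤ 2 * ((((k:ℝ)+1)+α)/(((k:ℝ)+1)+2*α)) := by
          have := le_trans e3 e4
          linarith
      _ = 2*(((k:ℝ)+1)+α)/(((k:ℝ)+1)+2*α) := by ring
  have hprod : ∏ k ∈ Finset.range n, (2 * Real.exp (-(α/((k:ℝ)+1))))
      ≤ ∏ k ∈ Finset.range n, (2*(((k:ℝ)+1)+α)/(((k:ℝ)+1)+2*α)) := by
    apply Finset.prod_le_prod
    · intro k _; positivity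
    · exact hfac
  refine le_trans ?_ hprod
  rw [Finset.prod_mul_distrib, Finset.prod_const, ← Real.exp_sum, Finset.card_range]
  have hsum : ∑ k ∈ Finset.range n, -(α/((k:ℝ)+1)) = -(α * ∑ k ∈ Finset.range n, 1/((k:ℝ)+1)) := by
    rw [Finset.mul_sum, ← Finset.sum_neg_distrib]
    apply Finset.sum_congr rfl
    intro k _; ring
  have hharm : ∑ k ∈ Finset.range n, 1/((k:ℝ)+1) ≤ 1 + Real.log n := by
    have h1 : ((harmonic n : ℚ) : ℝ) = ∑ k ∈ Finset.range n, 1/((k:ℝ)+1) := by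
      rw [harmonic]
      push_cast
      apply Finset.sum_congr rfl
      intro k _
      rw [one_div]
    rw [← h1]
    exact harmonic_le_one_add_log n
  have hexple : Real.exp (-(α * (1 + Real.log n))) ≤ Real.exp (∑ k ∈ Finset.range n, -(α/((k:ℝ)+1))) := by
    apply Real.exp_le_exp.2
    rw [hsum]
    apply neg_le_neg
    exact mul_le_mul_of_nonneg_left hharm hα
  have hval : Real.exp (-α) * (n:ℝ)^(-α) = Real.exp (-(α * (1 + Real.log n))) := by
    rw [Real.rpow_def_of_pos (by positivity : (0:ℝ) < (n:ℝ)), ← Real.exp_add]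
    congr 1
    ring
  calc 2^n * Real.exp (-α) * (n:ℝ)^(-α) = 2^n * (Real.exp (-α) * (n:ℝ)^(-α)) := by ring
    _ = 2^n * Real.exp (-(α * (1 + Real.log n))) := by rw [hval]
    _ ≤ 2^n * Real.exp (∑ k ∈ Finset.range n, -(α/((k:ℝ)+1))) := by
        apply mul_le_mul_of_nonneg_left hexple (by positivity)

lemma factLB : ∃ a : ℝ, 0 < a ∧ ∀ n : ℕ, 1 ≤ n →
    a * ((n:ℝ)^((n:ℝ)+3/2) * Real.exp (-(n:ℝ))) ≤ (((n+1).factorial : ℕ) : ℝ) := by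
  obtain ⟨a, ha, hall⟩ := Stirling.stirlingSeq'_bounded_by_pos_constant
  refine ⟨a / Real.exp 1, by positivity, ?_⟩
  intro n hn
  have hnp : (0:ℝ) < (n:ℝ) := by exact_mod_cast hn
  have h1 := hall n
  rw [Stirling.stirlingSeq] at h1
  push_cast at h1
  have hden : (0:ℝ) < Real.sqrt (2 * ((n:ℝ)+1)) * (((n:ℝ)+1) / Real.exp 1) ^ (n+1) := by
    positivity
  have hfa : a * (Real.sqrt (2 * ((n:ℝ)+1)) * (((n:ℝ)+1) / Real.exp 1) ^ (n+1))
      ≤ (((n+1).factorial : ℕ) : ℝ) := by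
    have := (le_div_iff₀ hden).1 h1
    push_cast
    linarith
  have d1 : (n:ℝ)^((1:ℝ)/2) ≤ Real.sqrt (2 * ((n:ℝ)+1)) := by
    rw [← Real.sqrt_eq_rpow]
    apply Real.sqrt_le_sqrt
    linarith
  have d2 : (n:ℝ)^(n+1) / Real.exp 1 ^ (n+1) ≤ (((n:ℝ)+1) / Real.exp 1) ^ (n+1) := by
    rw [div_pow]
    gcongr
    linarith
  have key1 : (n:ℝ)^((n:ℝ)+3/2) * Real.exp (-(n:ℝ)) / Real.exp 1
      = (n:ℝ)^((1:ℝ)/2) * ((n:ℝ)^(n+1) / Real.exp 1 ^ (n+1)) := by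
    have hr1 : (n:ℝ)^((n:ℝ)+3/2) = (n:ℝ)^((1:ℝ)/2) * (n:ℝ)^(n+1 : ℕ) := by
      rw [← Real.rpow_natCast (n:ℝ) (n+1), ← Real.rpow_add hnp]
      congr 1
      push_cast
      ring
    have hr2 : Real.exp (-(n:ℝ)) / Real.exp 1 = (Real.exp 1 ^ (n+1))⁻¹ := by
      rw [Real.exp_one_pow, ← Real.exp_sub, ← Real.exp_neg]
      congr 1
      push_cast
      ring
    calc (n:ℝ)^((n:ℝ)+3/2) * Real.exp (-(n:ℝ)) / Real.exp 1
        = (n:ℝ)^((n:ℝ)+3/2) * (Real.exp (-(n:ℝ)) / Real.exp 1) := by ring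
      _ = ((n:ℝ)^((1:ℝ)/2) * (n:ℝ)^(n+1 : ℕ)) * (Real.exp 1 ^ (n+1))⁻¹ := by rw [hr1, hr2]
      _ = (n:ℝ)^((1:ℝ)/2) * ((n:ℝ)^(n+1) / Real.exp 1 ^ (n+1)) := by ring
  have hsq : (0:ℝ) ≤ Real.sqrt (2 * ((n:ℝ)+1)) := Real.sqrt_nonneg _
  calc a / Real.exp 1 * ((n:ℝ)^((n:ℝ)+3/2) * Real.exp (-(n:ℝ)))
      = a * ((n:ℝ)^((n:ℝ)+3/2) * Real.exp (-(n:ℝ)) / Real.exp 1) := by ring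
    _ = a * ((n:ℝ)^((1:ℝ)/2) * ((n:ℝ)^(n+1) / Real.exp 1 ^ (n+1))) := by rw [key1]
    _ ≤ a * (Real.sqrt (2 * ((n:ℝ)+1)) * (((n:ℝ)+1) / Real.exp 1) ^ (n+1)) := by
        apply mul_le_mul_of_nonneg_left _ ha.le
        apply mul_le_mul d1 d2 (by positivity) hsq
    _ ≤ (((n+1).factorial : ℕ) : ℝ) := hfa




lemma arithBound (α A a : ℝ) (hα : 0 ≤ α) (hA : 0 < A) (ha : 0 < a) (n : ℕ) (hn : 1 ≤ n)
    (l F : ℝ) (hl : 2^n * Real.exp (-α) * (n:ℝ)^(-α) ≤ l)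
    (hF : a * ((n:ℝ)^((n:ℝ)+3/2) * Real.exp (-(n:ℝ))) ≤ F) :
    A / F * (1/l) ≤ (A * Real.exp α / a) * (Real.exp 1/2)^n * (n:ℝ)^(α - (n:ℝ) - 3/2) := by
  have hnp : (0:ℝ) < (n:ℝ) := by exact_mod_cast hn
  have hL0 : (0:ℝ) < 2^n * Real.exp (-α) * (n:ℝ)^(-α) := by positivity
  have hF0 : (0:ℝ) < a * ((n:ℝ)^((n:ℝ)+3/2) * Real.exp (-(n:ℝ))) := by positivity
  have hlpos : (0:ℝ) < l := lt_of_lt_of_le hL0 hl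
  have hFpos : (0:ℝ) < F := lt_of_lt_of_le hF0 hF
  have h1 : 1/l ≤ 1/(2^n * Real.exp (-α) * (n:ℝ)^(-α)) := one_div_le_one_div_of_le hL0 hl
  have h2 : 1/F ≤ 1/(a * ((n:ℝ)^((n:ℝ)+3/2) * Real.exp (-(n:ℝ)))) := one_div_le_one_div_of_le hF0 hF
  have step1 : A / F * (1/l) ≤ A * (1/(a * ((n:ℝ)^((n:ℝ)+3/2) * Real.exp (-(n:ℝ)))))
      * (1/(2^n * Real.exp (-α) * (n:ℝ)^(-α))) := by
    rw [div_eq_mul_one_div A F]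
    apply mul_le_mul
    · exact mul_le_mul_of_nonneg_left h2 hA.le
    · exact h1
    · positivity
    · positivity
  refine le_trans step1 (le_of_eq ?_)
  have i1 : (Real.exp (-(n:ℝ)))⁻¹ = Real.exp (n:ℝ) := by rw [← Real.exp_neg, neg_neg]
  have i2 : (Real.exp (-α))⁻¹ = Real.exp α := by rw [← Real.exp_neg, neg_neg]
  have i3 : ((n:ℝ)^(-α))⁻¹ = (n:ℝ)^α := by rw [← Real.rpow_neg hnp.le, neg_neg]
  have i4 : ((n:ℝ)^((n:ℝ)+3/2))⁻¹ = (n:ℝ)^(-((n:ℝ)+3/2)) := by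
    rw [← Real.rpow_neg hnp.le]
  have e1 : (Real.exp 1/2)^n = Real.exp (n:ℝ) * ((2:ℝ)^n)⁻¹ := by
    rw [div_pow, Real.exp_one_pow, div_eq_mul_inv]
  have e2 : (n:ℝ)^(α - (n:ℝ) - 3/2) = (n:ℝ)^(-((n:ℝ)+3/2)) * (n:ℝ)^α := by
    rw [← Real.rpow_add hnp]
    congr 1
    ring
  simp only [one_div, mul_inv]
  rw [i1, i2, i3, i4, e1, e2]
  ring

/-- **Asymptotic error bound for the barycentric Gegenbauer quadrature, case `α ≥ 0`.**
Let `f ∈ C^∞[-1,1]` with `‖f^{(n+1)}‖_∞ ≤ A` for all `n`, `A` independent of `n`.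
For each `n`, let `x n 0 < ⋯ < x n n` be the Gegenbauer–Gauss points (zeros of `G (n+1)`)
with Lagrange basis polynomials `L n i` and `p_{B,j,i} = ∫_{-1}^{x n j} (L n i)(t) dt`.
Then there are `B > 0` and `n₀` such that for all `n ≥ n₀` and all `j`:
`|∫_{-1}^{x n j} f - ∑ i, p_{B,j,i} f(x n i)| ≤ B (e/2)^n (x n j + 1) n^{α - n - 3/2}`. -/
theorem barycentric_gegenbauer_quadrature_asymptotic_bound_nonneg_alpha
    (α : ℝ) (hα : 0 ≤ α)
    (f : ℝ → ℝ)
    (hf : ContDiffOn ℝ (⊤ : ℕ∞) f (Set.Icc (-1 : ℝ) 1))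
    (A : ℝ) (hA : 0 < A)
    (hbound : ∀ n : ℕ, 1 ≤ n → ∀ t ∈ Set.Icc (-1 : ℝ) 1,
      |iteratedDerivWithin (n + 1) f (Set.Icc (-1 : ℝ) 1) t| ≤ A)
    (G : ℕ → Polynomial ℝ)
    (hG0 : G 0 = 1) (hG1 : G 1 = Polynomial.X)
    (hGrec : ∀ k : ℕ, 1 ≤ k →
      Polynomial.C ((k : ℝ) + 2 * α) * G (k + 1) =
        Polynomial.C (2 * ((k : ℝ) + α)) * (Polynomial.X * G k) -
          Polynomial.C (k : ℝ) * G (k - 1))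
    (x : ∀ n : ℕ, Fin (n + 1) → ℝ)
    (hx_mono : ∀ n, 1 ≤ n → StrictMono (x n))
    (hx_mem : ∀ n, 1 ≤ n → ∀ i, x n i ∈ Set.Ioo (-1 : ℝ) 1)
    (hx_root : ∀ n, 1 ≤ n → ∀ y : ℝ, (G (n + 1)).eval y = 0 ↔ ∃ i, y = x n i)
    (L : ∀ n : ℕ, Fin (n + 1) → Polynomial ℝ)
    (hL_deg : ∀ n, 1 ≤ n → ∀ k, (L n k).natDegree ≤ n)
    (hL_eval : ∀ n, 1 ≤ n → ∀ k j,
      (L n k).eval (x n j) = if j = k then (1 : ℝ) else 0) :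
    ∃ B : ℝ, 0 < B ∧ ∃ n₀ : ℕ, 1 ≤ n₀ ∧
      ∀ n, n₀ ≤ n → ∀ j : Fin (n + 1),
        |(∫ t in (-1 : ℝ)..(x n j), f t) -
            ∑ i : Fin (n + 1), (∫ t in (-1 : ℝ)..(x n j), (L n i).eval t) * f (x n i)| ≤
          B * (Real.exp 1 / 2) ^ n * (x n j + 1) *
            (n : ℝ) ^ (α - (n : ℝ) - 3/2) := by
  obtain ⟨a, ha, hfact⟩ := factLB
  refine ⟨A * Real.exp α / a, by positivity, 1, le_refl 1, ?_⟩
  intro n hn j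
  have hn1 : 1 ≤ n := hn
  have hnp : (0:ℝ) < (n:ℝ) := by exact_mod_cast hn1
  have hdeg := (Gdeg hα G hG0 hG1 hGrec (n+1)).1
  have hlc := (Gdeg hα G hG0 hG1 hGrec (n+1)).2
  have hlpos : 0 < lam α (n+1) := lam_pos hα (n+1)
  have hGne : G (n+1) ≠ 0 := by
    rw [← Polynomial.leadingCoeff_ne_zero, hlc]
    exact hlpos.ne'
  have hxinj : Function.Injective (x n) := (hx_mono n hn1).injective
  have hxIcc : ∀ i, x n i ∈ Set.Icc (-1:ℝ) 1 :=
    fun i => Set.Ioo_subset_Icc_self (hx_mem n hn1 i)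
  -- factorization of G (n+1)
  have hmult : (Multiset.map (x n) Finset.univ.val) ≤ (G (n+1)).roots := by
    rw [Multiset.le_iff_subset (Multiset.Nodup.map hxinj Finset.univ.nodup)]
    intro r hr
    obtain ⟨i, -, rfl⟩ := Multiset.mem_map.1 hr
    rw [Polynomial.mem_roots hGne]
    show (G (n+1)).eval (x n i) = 0
    rw [hx_root n hn1]
    exact ⟨i, rfl⟩
  have hcardm : Multiset.card (Multiset.map (x n) Finset.univ.val) = n+1 := by
    rw [Multiset.card_map]
    simp
  have hrooteq : (G (n+1)).roots = Multiset.map (x n) Finset.univ.val := by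
    apply (Multiset.eq_of_le_of_card_le hmult ?_).symm
    rw [hcardm]
    calc Multiset.card (G (n+1)).roots ≤ (G (n+1)).natDegree := (G (n+1)).card_roots'
      _ = n + 1 := hdeg
  have hfactor := Polynomial.C_leadingCoeff_mul_prod_multiset_X_sub_C
    (p := G (n+1)) (by rw [hrooteq, hcardm, hdeg])
  have hNprod : ∀ t : ℝ, lam α (n+1) * ∏ i, (t - x n i) = (G (n+1)).eval t := by
    intro t
    conv_rhs => rw [← hfactor]
    rw [hrooteq, hlc]
    rw [Polynomial.eval_mul, Polynomial.eval_C, Polynomial.eval_multiset_prod]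
    congr 1
    rw [Multiset.map_map, Multiset.map_map]
    rw [Finset.prod_eq_multiset_prod]
    congr 1
    apply Multiset.map_congr rfl
    intro i _
    simp
  have hNbound : ∀ t ∈ Set.Icc (-1:ℝ) 1, |∏ i, (t - x n i)| ≤ 1 / lam α (n+1) := by
    intro t ht
    have h1 : lam α (n+1) * |∏ i, (t - x n i)| ≤ 1 := by
      calc lam α (n+1) * |∏ i, (t - x n i)| = |lam α (n+1) * ∏ i, (t - x n i)| := by
            rw [abs_mul, abs_of_pos hlpos]
        _ = |(G (n+1)).eval t| := by rw [hNprod]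
        _ ≤ 1 := Gbdd hα G hG0 hG1 hGrec (n+1) t ht
    rw [le_div_iff₀ hlpos]
    linarith
  -- interpolant
  set P : Polynomial ℝ := ∑ i, Polynomial.C (f (x n i)) * L n i with hPdef
  have hPdeg : P.natDegree ≤ n := by
    apply Polynomial.natDegree_sum_le_of_forall_le
    intro i _
    calc (Polynomial.C (f (x n i)) * L n i).natDegree
        ≤ (Polynomial.C (f (x n i))).natDegree + (L n i).natDegree := Polynomial.natDegree_mul_le
      _ ≤ n := by rw [Polynomial.natDegree_C]; simpa using hL_deg n hn1 i
  have hPval : ∀ i, P.eval (x n i) = f (x n i) := by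
    intro i
    rw [hPdef, Polynomial.eval_finset_sum]
    simp only [Polynomial.eval_mul, Polynomial.eval_C, hL_eval n hn1, mul_ite, mul_one, mul_zero]
    rw [Finset.sum_ite_eq]
    simp
  -- pointwise error bound
  have herr : ∀ t ∈ Set.Icc (-1:ℝ) 1,
      |f t - P.eval t| ≤ A / (n+1).factorial * (1 / lam α (n+1)) := by
    intro t ht
    refine le_trans (interpError n f hf A (hbound n hn1) (x n) hxinj hxIcc P hPdeg hPval t ht) ?_
    apply mul_le_mul_of_nonneg_left (hNbound t ht)
    positivity
  -- integrals
  have hxj := hx_mem n hn1 j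
  have hxjle : (-1:ℝ) ≤ x n j := (hxj.1).le
  have hsub : Set.uIcc (-1:ℝ) (x n j) ⊆ Set.Icc (-1:ℝ) 1 := by
    rw [Set.uIcc_of_le hxjle]
    exact Set.Icc_subset_Icc (le_refl _) hxj.2.le
  have hfint : IntervalIntegrable f MeasureTheory.volume (-1) (x n j) :=
    (hf.continuousOn.mono hsub).intervalIntegrable
  have hPint : IntervalIntegrable (fun t => P.eval t) MeasureTheory.volume (-1) (x n j) :=
    ((polyCD P).continuous.continuousOn).intervalIntegrable
  have hsum : ∑ i : Fin (n+1), (∫ t in (-1 : ℝ)..(x n j), (L n i).eval t) * f (x n i)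
      = ∫ t in (-1 : ℝ)..(x n j), P.eval t := by
    have h1 : ∀ t : ℝ, P.eval t = ∑ i : Fin (n+1), (L n i).eval t * f (x n i) := by
      intro t
      rw [hPdef, Polynomial.eval_finset_sum]
      apply Finset.sum_congr rfl
      intro i _
      rw [Polynomial.eval_mul, Polynomial.eval_C]
      ring
    calc ∑ i : Fin (n+1), (∫ t in (-1 : ℝ)..(x n j), (L n i).eval t) * f (x n i)
        = ∑ i : Fin (n+1), ∫ t in (-1 : ℝ)..(x n j), (L n i).eval t * f (x n i) := by
          apply Finset.sum_congr rfl
          intro i _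
          rw [← intervalIntegral.integral_mul_const]
      _ = ∫ t in (-1 : ℝ)..(x n j), ∑ i : Fin (n+1), (L n i).eval t * f (x n i) := by
          rw [intervalIntegral.integral_finset_sum]
          intro i _
          exact (((polyCD (L n i)).continuous.mul continuous_const).continuousOn).intervalIntegrable
      _ = ∫ t in (-1 : ℝ)..(x n j), P.eval t := by
          congr 1
          funext t
          rw [h1]
  rw [hsum, ← intervalIntegral.integral_sub hfint hPint]
  -- main estimate
  have hest : |∫ t in (-1 : ℝ)..(x n j), (f t - P.eval t)|
      ≤ (A / (n+1).factorial * (1 / lam α (n+1))) * (x n j + 1) := by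
    have h1 := intervalIntegral.norm_integral_le_of_norm_le_const
      (C := A / (n+1).factorial * (1 / lam α (n+1)))
      (f := fun t => f t - P.eval t) (a := (-1:ℝ)) (b := x n j) ?_
    · rw [Real.norm_eq_abs] at h1
      refine le_trans h1 (le_of_eq ?_)
      congr 1
      rw [abs_of_nonneg (by linarith)]
      ring
    · intro t ht
      rw [Set.uIoc_of_le hxjle] at ht
      have htIcc : t ∈ Set.Icc (-1:ℝ) 1 :=
        ⟨ht.1.le, le_trans ht.2 hxj.2.le⟩
      rw [Real.norm_eq_abs]
      exact herr t htIcc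
  refine le_trans hest ?_
  have harith := arithBound α A a hα hA ha n hn1 (lam α (n+1)) ((n+1).factorial : ℝ)
    (lamLB hα n hn1) (hfact n hn1)
  calc (A / (n+1).factorial * (1 / lam α (n+1))) * (x n j + 1)
      ≤ ((A * Real.exp α / a) * (Real.exp 1/2)^n * (n:ℝ)^(α - (n:ℝ) - 3/2)) * (x n j + 1) := by
        apply mul_le_mul_of_nonneg_right harith (by linarith)
    _ = A * Real.exp α / a * (Real.exp 1 / 2) ^ n * (x n j + 1) * (n:ℝ)^(α - (n:ℝ) - 3/2) := by
        ring
end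

section
/- Let α > −1/2 and m ∈ ℤ⁺, let z_0 < ⋯ < z_m be the zeros of G_{m+1}^{(α)} (all lying in (−1,1)) with Christoffel numbers ϖ_i, and set ξ_i = (−1)^i · sin(arccos(z_i)) · √(ϖ_i). Let f : ℝ → ℝ and let P be the unique polynomial of degree ≤ m with P(z_i) = f(z_i) for all i. Then for every real x ∉ {z_0, …, z_m}, the sum Σ_{j=0}^{m} ξ_j/(x − z_j) is nonzero and P(x) = (Σ_{i=0}^{m} f(z_i) · ξ_i/(x − z_i)) / (Σ_{j=0}^{m} ξ_j/(x − z_j)). -/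
open Polynomial MeasureTheory intervalIntegral Set Finset

noncomputable def BGGw (α : ℝ) (t : ℝ) : ℝ := (1 - t ^ 2) ^ (α - 1/2 : ℝ)

set_option linter.unusedSectionVars false

section Analysis
variable {α : ℝ} (hα : -1/2 < α)
include hα

lemma BGGw_integrable : IntervalIntegrable (BGGw α) volume (-1) 1 := by
  have hr : (-1:ℝ) < α - 1/2 := by linarith
  set r := α - 1/2 with hrdef
  set C := max 1 ((2:ℝ)^r) with hCdef
  have hC1 : (1:ℝ) ≤ C := le_max_left _ _
  have hcont : ContinuousOn (BGGw α) (Ioo (-1:ℝ) 1) := by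
    have h1 : Continuous fun t : ℝ => 1 - t^2 := by continuity
    refine ContinuousOn.rpow_const h1.continuousOn (fun x hx => Or.inl ?_)
    rcases hx with ⟨h1x, h2x⟩; nlinarith
  have key : ∀ x : ℝ, -1 ≤ x → x ≤ 1 →
      ‖BGGw α x‖ ≤ C * ((min (1-x) (1+x)) ^ r) := by
    intro x h1x h2x
    have h1 : (0:ℝ) ≤ 1 - x := by linarith
    have h2 : (0:ℝ) ≤ 1 + x := by linarith
    have hprod : (1 - x^2) = (1-x) * (1+x) := by ring
    have heq : BGGw α x = (1-x)^r * (1+x)^r := by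
      rw [BGGw, hprod, Real.mul_rpow h1 h2]
    have hminmax : (1-x) * (1+x) = (min (1-x) (1+x)) * (max (1-x) (1+x)) := by
      rcases le_total (1-x) (1+x) with h | h
      · rw [min_eq_left h, max_eq_right h]
      · rw [min_eq_right h, max_eq_left h]; ring
    have hminnn : 0 ≤ min (1-x) (1+x) := le_min h1 h2
    have hmax1 : (1:ℝ) ≤ max (1-x) (1+x) := by
      rcases le_total (1-x) (1+x) with h | h
      · rw [max_eq_right h]; linarith
      · rw [max_eq_left h]; linarith
    have hmax2 : max (1-x) (1+x) ≤ 2 := by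
      rcases le_total (1-x) (1+x) with h | h
      · rw [max_eq_right h]; linarith
      · rw [max_eq_left h]; linarith
    have hfac : (max (1-x) (1+x)) ^ r ≤ C := by
      rcases le_or_gt 0 r with h0 | h0
      · exact le_max_of_le_right (Real.rpow_le_rpow (by linarith) hmax2 h0)
      · exact (Real.rpow_le_one_of_one_le_of_nonpos hmax1 h0.le).trans hC1
    have heq2 : BGGw α x = (min (1-x) (1+x))^r * (max (1-x) (1+x))^r := by
      rw [BGGw, hprod, hminmax, Real.mul_rpow hminnn (by linarith)]
    rw [heq2, Real.norm_eq_abs, abs_of_nonneg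
      (mul_nonneg (Real.rpow_nonneg hminnn r) (Real.rpow_nonneg (by linarith) r))]
    calc (min (1-x) (1+x))^r * (max (1-x) (1+x))^r
        ≤ (min (1-x) (1+x))^r * C :=
          mul_le_mul_of_nonneg_left hfac (Real.rpow_nonneg hminnn r)
      _ = C * (min (1-x) (1+x))^r := mul_comm _ _
  -- measurability on each piece
  have hmeasR : AEStronglyMeasurable (BGGw α) (volume.restrict (Ioc (0:ℝ) 1)) := by
    rw [← Measure.restrict_congr_set Ioo_ae_eq_Ioc]
    exact (hcont.mono (Ioo_subset_Ioo (by norm_num) le_rfl)).aestronglyMeasurable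
      measurableSet_Ioo
  have hmeasL : AEStronglyMeasurable (BGGw α) (volume.restrict (Ioc (-1:ℝ) 0)) := by
    rw [← Measure.restrict_congr_set Ioo_ae_eq_Ioc]
    exact (hcont.mono (Ioo_subset_Ioo le_rfl (by norm_num))).aestronglyMeasurable
      measurableSet_Ioo
  have hR : IntegrableOn (BGGw α) (Ioc (0:ℝ) 1) volume := by
    have hg : IntegrableOn (fun x : ℝ => C * (1-x)^r) (Ioc (0:ℝ) 1) volume := by
      have h := (intervalIntegrable_rpow' (a := (0:ℝ)) (b := 1) hr).comp_sub_left 1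
      simp only [sub_zero, sub_self] at h
      exact ((intervalIntegrable_iff_integrableOn_Ioc_of_le (by norm_num)).mp h.symm).const_mul C
    refine Integrable.mono' hg hmeasR ?_
    rw [ae_restrict_iff' measurableSet_Ioc]
    filter_upwards with x hx
    have := key x (by linarith [hx.1]) hx.2
    rwa [min_eq_left (by linarith [hx.1] : (1:ℝ)-x ≤ 1+x)] at this
  have hL : IntegrableOn (BGGw α) (Ioc (-1:ℝ) 0) volume := by
    have hg : IntegrableOn (fun x : ℝ => C * (1+x)^r) (Ioc (-1:ℝ) 0) volume := by
      have h := (intervalIntegrable_rpow' (a := (0:ℝ)) (b := 1) hr).comp_add_right 1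
      simp only [zero_sub, sub_self] at h
      have h' : IntervalIntegrable (fun x : ℝ => (1+x)^r) volume (-1) 0 := by
        simpa [add_comm] using h
      exact ((intervalIntegrable_iff_integrableOn_Ioc_of_le (by norm_num)).mp h').const_mul C
    refine Integrable.mono' hg hmeasL ?_
    rw [ae_restrict_iff' measurableSet_Ioc]
    filter_upwards with x hx
    have := key x hx.1.le (by linarith [hx.2])
    rwa [min_eq_right (by linarith [hx.2] : (1:ℝ)+x ≤ 1-x)] at this
  rw [intervalIntegrable_iff_integrableOn_Ioc_of_le (by norm_num)]
  have := hL.union hR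
  rwa [Set.Ioc_union_Ioc_eq_Ioc (by norm_num) (by norm_num)] at this

end Analysis

section A2
variable {α : ℝ} (hα : -1/2 < α)
include hα

lemma BGGw_contOn : ContinuousOn (BGGw α) (Ioo (-1:ℝ) 1) := by
  have h1 : Continuous fun t : ℝ => 1 - t^2 := by continuity
  refine ContinuousOn.rpow_const h1.continuousOn (fun x hx => Or.inl ?_)
  rcases hx with ⟨h1x, h2x⟩; nlinarith

lemma BGGw_cont_integrable {g : ℝ → ℝ} (hg : Continuous g) :
    IntervalIntegrable (fun t => g t * BGGw α t) volume (-1) 1 := by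
  rw [intervalIntegrable_iff_integrableOn_Ioc_of_le (by norm_num)]
  obtain ⟨M, hM⟩ := (isCompact_Icc (a := (-1:ℝ)) (b := 1)).exists_bound_of_continuousOn
    hg.continuousOn
  have hbase : IntegrableOn (BGGw α) (Ioc (-1:ℝ) 1) volume :=
    (intervalIntegrable_iff_integrableOn_Ioc_of_le (by norm_num)).mp (BGGw_integrable hα)
  refine Integrable.mono' (hbase.const_mul M) ?_ ?_
  · rw [← Measure.restrict_congr_set Ioo_ae_eq_Ioc]
    exact (hg.continuousOn.mul (BGGw_contOn hα)).aestronglyMeasurable measurableSet_Ioo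
  · rw [ae_restrict_iff' measurableSet_Ioc]
    filter_upwards with x hx
    have hxm : x ∈ Icc (-1:ℝ) 1 := ⟨hx.1.le, hx.2⟩
    have hwnn : 0 ≤ BGGw α x := Real.rpow_nonneg (by nlinarith [hxm.1, hxm.2]) _
    rw [norm_mul, Real.norm_eq_abs (BGGw α x), abs_of_nonneg hwnn]
    exact mul_le_mul_of_nonneg_right (hM x hxm) hwnn

lemma BGGw_poly_integrable (p : Polynomial ℝ) :
    IntervalIntegrable (fun t => p.eval t * BGGw α t) volume (-1) 1 :=
  BGGw_cont_integrable hα p.continuous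

lemma BGGw_ftc (p : Polynomial ℝ) :
    ∫ t in (-1:ℝ)..1,
      ((1 - t^2) * (derivative p).eval t - (2*α+1) * t * p.eval t) * BGGw α t = 0 := by
  set F : ℝ → ℝ := fun t => (1 - t^2) ^ (α + 1/2 : ℝ) * p.eval t with hF
  have hexp : (0:ℝ) < α + 1/2 := by linarith
  have hcontF : ContinuousOn F (Icc (-1:ℝ) 1) := by
    refine ContinuousOn.mul ?_ p.continuous.continuousOn
    exact ContinuousOn.rpow_const (continuous_const.sub (continuous_pow 2)).continuousOn
      (fun x _ => Or.inr hexp.le)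
  have hderiv : ∀ x ∈ Ioo (-1:ℝ) 1, HasDerivAt F
      (((1 - x^2) * (derivative p).eval x - (2*α+1) * x * p.eval x) * BGGw α x) x := by
    intro x hx
    have hxpos : 0 < 1 - x^2 := by nlinarith [hx.1, hx.2]
    have h1 : HasDerivAt (fun t : ℝ => 1 - t^2) (-(2*x)) x := by
      simpa using ((hasDerivAt_pow 2 x).const_sub 1)
    have h2 := h1.rpow_const (p := α + 1/2) (Or.inl hxpos.ne')
    have h3 := h2.mul (p.hasDerivAt x)
    convert h3 using 1
    case e'_4 => rfl
    case e'_5 => rfl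
    case e'_8 => rfl
    have e1 : (α + 1/2 - 1 : ℝ) = α - 1/2 := by ring
    have e2 : (1 - x^2) ^ (α + 1/2 : ℝ) = (1-x^2) * (1-x^2) ^ (α - 1/2 : ℝ) := by
      rw [show (α + 1/2 : ℝ) = 1 + (α - 1/2) by ring, Real.rpow_add hxpos, Real.rpow_one]
    rw [e1, e2, BGGw]
    ring
  have hint : IntervalIntegrable
      (fun t => ((1 - t^2) * (derivative p).eval t - (2*α+1) * t * p.eval t) * BGGw α t)
      volume (-1) 1 := by
    apply BGGw_cont_integrable hα
    exact ((continuous_const.sub (continuous_pow 2)).mul (derivative p).continuous).sub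
      ((continuous_const.mul continuous_id).mul p.continuous)
  have := integral_eq_sub_of_hasDerivAt_of_le (by norm_num) hcontF hderiv hint
  rw [this, hF]
  norm_num [Real.zero_rpow hexp.ne']

end A2


lemma BGG_aux_div (c l d pr : ℝ) (hl : l ≠ 0) (hd : d ≠ 0) (hpr : pr ≠ 0) :
    (c / l) / d = c * ((l⁻¹ * pr) / (d * pr)) := by
  field_simp

lemma BGG_aux_sign (u l S q : ℝ) (hS : S * S = 1) (hl : l ≠ 0) :
    u * (q / (S * l)) * l = u * S * q := by
  have hSne : S ≠ 0 := fun h => by simp [h] at hS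
  field_simp
  linear_combination (-(u * q)) * hS



section Alg
variable {α : ℝ} (hα : -1/2 < α) {G : ℕ → Polynomial ℝ}
  (hG0 : G 0 = 1) (hG1 : G 1 = Polynomial.X)
  (hGrec : ∀ k : ℕ, 1 ≤ k →
      Polynomial.C ((k : ℝ) + 2 * α) * G (k + 1) =
        Polynomial.C (2 * ((k : ℝ) + α)) * (Polynomial.X * G k) -
          Polynomial.C (k : ℝ) * G (k - 1))
include hα hG0 hG1 hGrec


lemma BGG_deg : ∀ n, (G n).natDegree = n ∧ 0 < (G n).leadingCoeff := by
  intro n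
  induction n using Nat.strong_induction_on with
  | _ n ih =>
    match n with
    | 0 => rw [hG0]; simp
    | 1 => rw [hG1]; simp
    | (k+2) =>
      obtain ⟨hd1, hl1⟩ := ih (k+1) (by omega)
      obtain ⟨hd0, hl0⟩ := ih k (by omega)
      have hk0 : (0:ℝ) ≤ (k:ℝ) := Nat.cast_nonneg k
      have hc1 : (0:ℝ) < ((k+1:ℕ):ℝ) + 2*α := by push_cast; linarith
      have hc2 : (0:ℝ) < 2*(((k+1:ℕ):ℝ) + α) := by push_cast; linarith
      have hrec := hGrec (k+1) (by omega)
      simp only [Nat.add_sub_cancel] at hrec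
      have hG1ne : G (k+1) ≠ 0 := leadingCoeff_ne_zero.mp hl1.ne'
      have hG0ne : G k ≠ 0 := leadingCoeff_ne_zero.mp hl0.ne'
      have hdA : (C (2*(((k+1:ℕ):ℝ) + α)) * (X * G (k+1))).natDegree = k + 2 := by
        rw [natDegree_C_mul hc2.ne', natDegree_X_mul hG1ne, hd1]
      have hdB : (C ((k+1:ℕ):ℝ) * G k).natDegree = k := by
        rw [natDegree_C_mul (by positivity : ((k+1:ℕ):ℝ) ≠ 0), hd0]
      have hdAB : (C (2*(((k+1:ℕ):ℝ) + α)) * (X * G (k+1)) - C ((k+1:ℕ):ℝ) * G k).natDegree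
          = k + 2 := by
        rw [natDegree_sub_eq_left_of_natDegree_lt]; exact hdA
        rw [hdA, hdB]; omega
      have hlAB : (C (2*(((k+1:ℕ):ℝ) + α)) * (X * G (k+1)) - C ((k+1:ℕ):ℝ) * G k).leadingCoeff
          = 2*(((k+1:ℕ):ℝ) + α) * (G (k+1)).leadingCoeff := by
        rw [leadingCoeff_sub_of_degree_lt, leadingCoeff_mul, leadingCoeff_mul, leadingCoeff_C,
          leadingCoeff_X, one_mul]
        apply Polynomial.degree_lt_degree
        rw [hdA, hdB]; omega
      constructor
      · have := congrArg natDegree hrec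
        rwa [natDegree_C_mul hc1.ne', hdAB] at this
      · have := congrArg leadingCoeff hrec
        rw [leadingCoeff_mul, leadingCoeff_C, hlAB] at this
        have hpos : 0 < (((k+1:ℕ):ℝ) + 2*α) * (G (k+2)).leadingCoeff := by
          rw [this]; positivity
        nlinarith [hc1]




lemma BGG_I1 : ∀ n : ℕ,
    (1 - X^2 : Polynomial ℝ) * derivative (G n) = C (n:ℝ) * (G (n-1) - X * G n) := by
  have I1'Of : ∀ j : ℕ, ((1 - X^2 : Polynomial ℝ) * derivative (G j)
        = C (j:ℝ) * (G (j-1) - X * G j)) →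
      (1 - X^2 : Polynomial ℝ) * derivative (G j) = C ((j:ℝ) + 2*α) * (X * G j - G (j+1)) := by
    intro j hI1
    match j with
    | 0 => simp [hG0, hG1]
    | (i+1) =>
      have hrec := hGrec (i+1) (by omega)
      simp only [Nat.add_sub_cancel] at hrec hI1
      push_cast at hrec hI1 ⊢
      simp only [map_add, map_mul, map_ofNat, map_one] at hrec hI1 ⊢
      linear_combination hI1 + hrec
  intro n
  induction n using Nat.strong_induction_on with
  | _ n ih =>
    match n with
    | 0 => simp [hG0]
    | 1 => simp only [hG1, derivative_X, hG0]; push_cast; simp only [map_one]; ring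
    | (k+2) =>
      have h1 := ih (k+1) (by omega)
      have h1' := I1'Of k (ih k (by omega))
      have hrec := hGrec (k+1) (by omega)
      have hdrec := congrArg derivative hrec
      simp only [derivative_mul, derivative_sub, derivative_C, derivative_X, zero_mul, one_mul,
        zero_add, add_zero] at hdrec
      simp only [Nat.add_sub_cancel] at h1 hrec hdrec
      have hne : (C ((k:ℝ)+1+2*α) : Polynomial ℝ) ≠ 0 := by
        rw [Ne, C_eq_zero]
        have : (0:ℝ) ≤ (k:ℝ) := Nat.cast_nonneg k
        intro h; linarith
      apply mul_left_cancel₀ hne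
      push_cast at h1 h1' hrec hdrec ⊢
      simp only [map_add, map_mul, map_ofNat, map_one] at h1 h1' hrec hdrec ⊢
      linear_combination (1-X^2) * hdrec + (2*(C (k:ℝ) + 1 + C α))*X*h1
        - (C (k:ℝ)+1)*h1' + (C (k:ℝ)+1+1)*X*hrec

lemma BGG_I1' : ∀ j : ℕ,
    (1 - X^2 : Polynomial ℝ) * derivative (G j) = C ((j:ℝ) + 2*α) * (X * G j - G (j+1)) := by
  intro j
  have hI1 := BGG_I1 hα hG0 hG1 hGrec j
  match j with
  | 0 => simp [hG0, hG1]
  | (i+1) =>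
    have hrec := hGrec (i+1) (by omega)
    simp only [Nat.add_sub_cancel] at hrec hI1
    push_cast at hrec hI1 ⊢
    simp only [map_add, map_mul, map_ofNat, map_one] at hrec hI1 ⊢
    linear_combination hI1 + hrec

lemma BGG_I2 : ∀ n : ℕ,
    (1 - X^2 : Polynomial ℝ) * derivative (derivative (G n))
      = C (2*α+1) * (X * derivative (G n)) - C ((n:ℝ)*((n:ℝ)+2*α)) * G n := by
  intro n
  match n with
  | 0 => simp [hG0]
  | (j+1) =>
    have h1 := BGG_I1 hα hG0 hG1 hGrec (j+1)
    have h1' := BGG_I1' hα hG0 hG1 hGrec j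
    have hd := congrArg derivative h1
    simp only [derivative_mul, derivative_sub, derivative_C, derivative_one, derivative_X,
      derivative_X_pow, zero_mul, one_mul, zero_add, add_zero, zero_sub] at hd
    simp only [Nat.add_sub_cancel] at h1 hd
    have hne : (1 - X^2 : Polynomial ℝ) ≠ 0 := by
      intro h
      have h2 := congrArg (fun p => Polynomial.coeff p 2) h
      simp [Polynomial.coeff_one] at h2
    apply mul_left_cancel₀ hne
    push_cast at h1 h1' hd ⊢
    simp only [map_add, map_mul, map_ofNat, map_one] at h1 h1' hd ⊢
    linear_combination (1-X^2) * hd + (C (j:ℝ)+1) * h1' - (C (j:ℝ)+2*C α)*X*h1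




lemma BGG_ortho : ∀ n k : ℕ, n ≠ k →
    ∫ t in (-1:ℝ)..1, ((G n).eval t * (G k).eval t) * BGGw α t = 0 := by
  have key : ∀ n k : ℕ,
      ((k:ℝ)*((k:ℝ)+2*α) - (n:ℝ)*((n:ℝ)+2*α)) *
        ∫ t in (-1:ℝ)..1, ((G n).eval t * (G k).eval t) * BGGw α t = 0 := by
    intro n k
    set p : Polynomial ℝ := derivative (G n) * G k - G n * derivative (G k) with hp
    have h2n := BGG_I2 hα hG0 hG1 hGrec n
    have h2k := BGG_I2 hα hG0 hG1 hGrec k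
    have hpoly : (1 - X^2 : Polynomial ℝ) * derivative p
        = C (2*α+1) * (X * p)
          + C ((k:ℝ)*((k:ℝ)+2*α) - (n:ℝ)*((n:ℝ)+2*α)) * (G n * G k) := by
      rw [hp, derivative_sub, derivative_mul, derivative_mul]
      push_cast at h2n h2k ⊢
      simp only [map_add, map_mul, map_sub, map_ofNat, map_one] at h2n h2k ⊢
      linear_combination (G k) * h2n - (G n) * h2k
    have hftc := BGGw_ftc hα p
    have heq : ∀ t : ℝ,
        ((1 - t^2) * (derivative p).eval t - (2*α+1) * t * p.eval t) * BGGw α t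
        = ((k:ℝ)*((k:ℝ)+2*α) - (n:ℝ)*((n:ℝ)+2*α)) *
            (((G n).eval t * (G k).eval t) * BGGw α t) := by
      intro t
      have := congrArg (eval t) hpoly
      simp only [eval_mul, eval_add, eval_sub, eval_C, eval_X, eval_pow, eval_one] at this
      linear_combination (BGGw α t) * this
    rw [intervalIntegral.integral_congr (g := fun t =>
        ((k:ℝ)*((k:ℝ)+2*α) - (n:ℝ)*((n:ℝ)+2*α)) *
          (((G n).eval t * (G k).eval t) * BGGw α t)) (fun t _ => heq t),
      intervalIntegral.integral_const_mul] at hftc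
    exact hftc
  intro n k hnk
  have hc : ((k:ℝ)*((k:ℝ)+2*α) - (n:ℝ)*((n:ℝ)+2*α)) ≠ 0 := by
    rcases Nat.lt_or_ge n k with h | h
    · have h1 : (n:ℝ) + 1 ≤ (k:ℝ) := by exact_mod_cast h
      have h2 : (0:ℝ) ≤ (n:ℝ) := Nat.cast_nonneg n
      nlinarith
    · have h1 : (k:ℝ) + 1 ≤ (n:ℝ) := by exact_mod_cast (by omega : k + 1 ≤ n)
      have h2 : (0:ℝ) ≤ (k:ℝ) := Nat.cast_nonneg k
      nlinarith
  have := key n k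
  exact (mul_eq_zero.mp this).resolve_left hc



lemma BGG_ortho_low : ∀ N : ℕ, ∀ p : Polynomial ℝ, p.natDegree ≤ N → ∀ n : ℕ, N < n →
    ∫ t in (-1:ℝ)..1, (p.eval t * (G n).eval t) * BGGw α t = 0 := by
  intro N
  induction N with
  | zero =>
    intro p hp n hn
    have hpc : p = C (p.coeff 0) := Polynomial.eq_C_of_natDegree_le_zero hp
    have h0 := BGG_ortho hα hG0 hG1 hGrec 0 n (by omega)
    rw [hG0] at h0
    simp only [eval_one, one_mul] at h0
    calc ∫ t in (-1:ℝ)..1, (p.eval t * (G n).eval t) * BGGw α t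
        = ∫ t in (-1:ℝ)..1, p.coeff 0 * ((G n).eval t * BGGw α t) := by
          apply integral_congr; intro t _
          conv_lhs => rw [hpc]
          simp only [eval_C]; ring
      _ = p.coeff 0 * ∫ t in (-1:ℝ)..1, (G n).eval t * BGGw α t :=
          intervalIntegral.integral_const_mul _ _
      _ = 0 := by rw [h0, mul_zero]
  | succ N IH =>
    intro p hp n hn
    have hdg := BGG_deg hα hG0 hG1 hGrec (N+1)
    set lc := (G (N+1)).leadingCoeff with hlcdef
    have hlc : lc ≠ 0 := hdg.2.ne'
    set c := p.coeff (N+1) / lc with hc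
    set q := p - C c * G (N+1) with hq
    have hqdeg : q.natDegree ≤ N := by
      rw [Polynomial.natDegree_le_iff_coeff_eq_zero]
      intro i hi
      rw [hq]
      simp only [coeff_sub, coeff_C_mul]
      rcases Nat.lt_or_ge (N+1) i with h | h
      · rw [coeff_eq_zero_of_natDegree_lt (lt_of_le_of_lt hp h),
          coeff_eq_zero_of_natDegree_lt (by rw [hdg.1]; exact h), mul_zero, sub_zero]
      · have hiN : i = N+1 := by omega
        subst hiN
        have hcoeff : (G (N+1)).coeff (N+1) = lc := by
          have h' := Polynomial.coeff_natDegree (p := G (N+1))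
          rwa [hdg.1] at h'
        rw [hcoeff, hc, div_mul_cancel₀ _ hlc, sub_self]
    have h1 := IH q hqdeg n (by omega)
    have h2 := BGG_ortho hα hG0 hG1 hGrec (N+1) n (by omega)
    have hint1 : IntervalIntegrable (fun t => (q.eval t * (G n).eval t) * BGGw α t)
        volume (-1) 1 := BGGw_cont_integrable hα (q.continuous.mul (G n).continuous)
    have hint2 : IntervalIntegrable
        (fun t => c * (((G (N+1)).eval t * (G n).eval t) * BGGw α t)) volume (-1) 1 :=
      (BGGw_cont_integrable hα ((G (N+1)).continuous.mul (G n).continuous)).const_mul c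
    calc ∫ t in (-1:ℝ)..1, (p.eval t * (G n).eval t) * BGGw α t
        = ∫ t in (-1:ℝ)..1, ((q.eval t * (G n).eval t) * BGGw α t
            + c * (((G (N+1)).eval t * (G n).eval t) * BGGw α t)) := by
          apply integral_congr; intro t _
          rw [hq]; simp only [eval_sub, eval_mul, eval_C]; ring
      _ = (∫ t in (-1:ℝ)..1, (q.eval t * (G n).eval t) * BGGw α t)
            + ∫ t in (-1:ℝ)..1, c * (((G (N+1)).eval t * (G n).eval t) * BGGw α t) :=
          intervalIntegral.integral_add hint1 hint2
      _ = 0 := by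
          rw [h1, intervalIntegral.integral_const_mul, h2, mul_zero, add_zero]

lemma BGG_sq_pos : ∀ n : ℕ,
    0 < ∫ t in (-1:ℝ)..1, ((G n).eval t * (G n).eval t) * BGGw α t := by
  intro n
  set f : ℝ → ℝ := fun t => ((G n).eval t * (G n).eval t) * BGGw α t with hf
  have hconti : IntervalIntegrable f volume (-1) 1 :=
    BGGw_cont_integrable hα ((G n).continuous.mul (G n).continuous)
  have hnn : ∀ t ∈ Icc (-1:ℝ) 1, 0 ≤ f t := fun t ht =>
    mul_nonneg (mul_self_nonneg _) (Real.rpow_nonneg (by nlinarith [ht.1, ht.2]) _)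
  have hge : 0 ≤ ∫ t in (-1:ℝ)..1, f t :=
    intervalIntegral.integral_nonneg (by norm_num) hnn
  rcases hge.lt_or_eq with h | h
  · exact h
  exfalso
  have hioc : ∫ t in Ioc (-1:ℝ) 1, f t = 0 := by
    rw [← intervalIntegral.integral_of_le (by norm_num : (-1:ℝ) ≤ 1)]; exact h.symm
  have hintIoc : Integrable f (volume.restrict (Ioc (-1:ℝ) 1)) :=
    (intervalIntegrable_iff_integrableOn_Ioc_of_le (by norm_num)).mp hconti
  have hae : f =ᵐ[volume.restrict (Ioc (-1:ℝ) 1)] 0 := by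
    refine (integral_eq_zero_iff_of_nonneg_ae ?_ hintIoc).mp hioc
    filter_upwards [ae_restrict_mem measurableSet_Ioc] with t ht
    exact hnn t ⟨ht.1.le, ht.2⟩
  have h0 : ∀ᵐ t, t ∈ Ioc (-1:ℝ) 1 → f t = 0 := ae_imp_of_ae_restrict hae
  rw [MeasureTheory.ae_iff] at h0
  have hGne : G n ≠ 0 := leadingCoeff_ne_zero.mp (BGG_deg hα hG0 hG1 hGrec n).2.ne'
  have hZ : {t : ℝ | (G n).IsRoot t}.Finite := Polynomial.finite_setOf_isRoot hGne
  have hsub : Ioo (-1:ℝ) 1 ⊆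
      {t | ¬(t ∈ Ioc (-1:ℝ) 1 → f t = 0)} ∪ {t : ℝ | (G n).IsRoot t} := by
    intro t ht
    by_cases hroot : (G n).eval t = 0
    · exact Or.inr hroot
    · left
      simp only [Set.mem_setOf_eq, Classical.not_imp]
      refine ⟨⟨ht.1, ht.2.le⟩, ?_⟩
      have hwpos : 0 < BGGw α t := Real.rpow_pos_of_pos (by nlinarith [ht.1, ht.2]) _
      exact (mul_pos (mul_self_pos.mpr hroot) hwpos).ne'
  have hnull : volume (Ioo (-1:ℝ) 1) = 0 :=
    measure_mono_null hsub (measure_union_null h0 (hZ.measure_zero _))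
  rw [Real.volume_Ioo] at hnull
  norm_num at hnull


end Alg

/-- **Barycentric Lagrange interpolation at Gegenbauer–Gauss points.**
Let `α > -1/2`, `m ∈ ℤ⁺`, let `z 0 < ⋯ < z m` be the zeros of `G (m+1)` (all in `(-1,1)`)
with Christoffel numbers `w i`, and set `ξ i = (-1)^i sin(arccos(z i)) √(w i)`.
If `P` is the (unique) polynomial of degree `≤ m` with `P (z i) = f (z i)` for all `i`,
then for every `y ∉ {z 0, …, z m}` the sum `∑ j, ξ j / (y - z j)` is nonzero and
`P y = (∑ i, f (z i) ξ i / (y - z i)) / (∑ j, ξ j / (y - z j))`. -/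
theorem barycentric_lagrange_interpolation_GG
    (α : ℝ) (hα : -1/2 < α) (m : ℕ) (hm : 1 ≤ m)
    (G : ℕ → Polynomial ℝ)
    (hG0 : G 0 = 1) (hG1 : G 1 = Polynomial.X)
    (hGrec : ∀ k : ℕ, 1 ≤ k →
      Polynomial.C ((k : ℝ) + 2 * α) * G (k + 1) =
        Polynomial.C (2 * ((k : ℝ) + α)) * (Polynomial.X * G k) -
          Polynomial.C (k : ℝ) * G (k - 1))
    (z : Fin (m + 1) → ℝ)
    (hz_mono : StrictMono z)
    (hz_mem : ∀ i, z i ∈ Set.Ioo (-1 : ℝ) 1)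
    (hz_root : ∀ y : ℝ, (G (m + 1)).eval y = 0 ↔ ∃ i, y = z i)
    (L : Fin (m + 1) → Polynomial ℝ)
    (hL_deg : ∀ k, (L k).natDegree ≤ m)
    (hL_eval : ∀ k j, (L k).eval (z j) = if j = k then (1 : ℝ) else 0)
    (w : Fin (m + 1) → ℝ)
    (hw : ∀ k, w k = ∫ t in (-1 : ℝ)..1, (L k).eval t * (1 - t ^ 2) ^ (α - 1/2))
    (ξ : Fin (m + 1) → ℝ)
    (hξ : ∀ i, ξ i = (-1 : ℝ) ^ (i : ℕ) *
      (Real.sin (Real.arccos (z i)) * Real.sqrt (w i)))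
    (f : ℝ → ℝ)
    (P : Polynomial ℝ)
    (hP_deg : P.natDegree ≤ m)
    (hP_interp : ∀ i, P.eval (z i) = f (z i)) :
    ∀ y : ℝ, y ∉ Set.range z →
      (∑ j : Fin (m + 1), ξ j / (y - z j)) ≠ 0 ∧
        P.eval y =
          (∑ i : Fin (m + 1), f (z i) * (ξ i / (y - z i))) /
            (∑ j : Fin (m + 1), ξ j / (y - z j)) := by
  classical
  have hdeg := BGG_deg hα hG0 hG1 hGrec
  have hz_inj : Function.Injective z := hz_mono.injective
  have hcard : Fintype.card (Fin (m+1)) = m + 1 := Fintype.card_fin _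
  -- the vanishing lemma
  have hvanish : ∀ q : Polynomial ℝ, q.natDegree ≤ m → (∀ i, q.eval (z i) = 0) → q = 0 := by
    intro q hq hzq
    exact Polynomial.eq_zero_of_natDegree_lt_card_of_eval_eq_zero q hz_inj hzq
      (by rw [hcard]; omega)
  -- leading coefficient
  set a := (G (m+1)).leadingCoeff with ha_def
  have ha : 0 < a := (hdeg (m+1)).2
  set ℓfull : Polynomial ℝ := ∏ j : Fin (m+1), (X - C (z j)) with hℓfull
  have hℓmonic : ℓfull.Monic := monic_prod_of_monic _ _ (fun j _ => monic_X_sub_C (z j))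
  have hℓdeg : ℓfull.natDegree = m + 1 := by
    rw [hℓfull, natDegree_prod _ _ (fun j _ => X_sub_C_ne_zero (z j))]
    simp [natDegree_X_sub_C]
  have hfact : G (m+1) = C a * ℓfull := by
    have hD : G (m+1) - C a * ℓfull = 0 := by
      apply hvanish
      · rw [Polynomial.natDegree_le_iff_coeff_eq_zero]
        intro i hi
        rw [coeff_sub, coeff_C_mul]
        rcases Nat.lt_or_ge (m+1) i with h | h
        · rw [coeff_eq_zero_of_natDegree_lt (by rw [(hdeg (m+1)).1]; exact h),
            coeff_eq_zero_of_natDegree_lt (by rw [hℓdeg]; exact h), mul_zero, sub_zero]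
        · have : i = m+1 := by omega
          subst this
          have h1 : (G (m+1)).coeff (m+1) = a := by
            have h' := Polynomial.coeff_natDegree (p := G (m+1))
            rwa [(hdeg (m+1)).1] at h'
          have h2 : ℓfull.coeff (m+1) = 1 := by
            have h' := hℓmonic.coeff_natDegree
            rwa [hℓdeg] at h'
          rw [h1, h2, mul_one, sub_self]
      · intro i
        rw [eval_sub, eval_mul, eval_C]
        have hroot : (G (m+1)).eval (z i) = 0 := (hz_root (z i)).mpr ⟨i, rfl⟩
        have hℓroot : ℓfull.eval (z i) = 0 := by
          rw [hℓfull, eval_prod]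
          exact Finset.prod_eq_zero (mem_univ i) (by simp)
        rw [hroot, hℓroot, mul_zero, sub_zero]
    exact sub_eq_zero.mp hD
  -- per-node products
  set ℓk : Fin (m+1) → Polynomial ℝ := fun k => ∏ j ∈ univ.erase k, (X - C (z j)) with hℓk
  set lden : Fin (m+1) → ℝ := fun k => ∏ j ∈ univ.erase k, (z k - z j) with hlden
  have hlden_ne : ∀ k, lden k ≠ 0 := by
    intro k
    rw [hlden]
    refine Finset.prod_ne_zero_iff.mpr (fun j hj => ?_)
    have : j ≠ k := Finset.ne_of_mem_erase hj
    exact sub_ne_zero.mpr (fun h => this (hz_inj h.symm))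
  have hℓk_eval_self : ∀ k, (ℓk k).eval (z k) = lden k := by
    intro k; rw [hℓk, hlden, eval_prod]; simp
  have hℓk_eval_other : ∀ k j, j ≠ k → (ℓk k).eval (z j) = 0 := by
    intro k j hjk
    rw [hℓk, eval_prod]
    exact Finset.prod_eq_zero (Finset.mem_erase.mpr ⟨hjk, mem_univ j⟩) (by simp)
  have hℓk_deg : ∀ k, (ℓk k).natDegree ≤ m := by
    intro k
    calc (ℓk k).natDegree ≤ ∑ j ∈ univ.erase k, (X - C (z j)).natDegree :=
          natDegree_prod_le _ _
      _ ≤ m := by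
          simp only [natDegree_X_sub_C]
          rw [Finset.sum_const, smul_eq_mul, mul_one, Finset.card_erase_of_mem (mem_univ k)]
          simp
  have hℓsplit : ∀ k, ℓfull = (X - C (z k)) * ℓk k := by
    intro k
    rw [hℓfull, hℓk]
    exact (Finset.mul_prod_erase univ _ (mem_univ k)).symm
  have hL_explicit : ∀ k, L k = C (lden k)⁻¹ * ℓk k := by
    intro k
    have hD : L k - C (lden k)⁻¹ * ℓk k = 0 := by
      apply hvanish
      · refine le_trans (natDegree_sub_le _ _) (max_le (hL_deg k) ?_)
        exact le_trans (natDegree_C_mul_le _ _) (hℓk_deg k)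
      · intro i
        rw [eval_sub, eval_mul, eval_C, hL_eval k i]
        by_cases hik : i = k
        · subst hik
          rw [if_pos rfl, hℓk_eval_self, inv_mul_cancel₀ (hlden_ne i), sub_self]
        · rw [if_neg hik, hℓk_eval_other k i hik, mul_zero, sub_zero]
    exact sub_eq_zero.mp hD
  -- the key derivative identity at the nodes
  have hkey1 : ∀ k, (1 - (z k)^2) * a * lden k = ((m:ℝ)+1) * (G m).eval (z k) := by
    intro k
    have hI1 := BGG_I1 hα hG0 hG1 hGrec (m+1)
    simp only [Nat.add_sub_cancel] at hI1
    have hev := congrArg (eval (z k)) hI1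
    have hder : (derivative (G (m+1))).eval (z k) = a * lden k := by
      have : derivative (G (m+1)) = C a * (ℓk k + (X - C (z k)) * derivative (ℓk k)) := by
        rw [hfact, hℓsplit k]
        simp only [derivative_C_mul, derivative_mul, derivative_sub, derivative_X, derivative_C]
        ring
      rw [this]
      simp [hℓk_eval_self k]
    have hroot : (G (m+1)).eval (z k) = 0 := (hz_root (z k)).mpr ⟨k, rfl⟩
    simp only [eval_mul, eval_sub, eval_one, eval_pow, eval_X, eval_C, hder, hroot,
      mul_zero, sub_zero] at hev
    push_cast at hev
    linarith [hev]
  have hz2 : ∀ k : Fin (m+1), 0 < 1 - (z k)^2 := by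
    intro k
    have h1 := (hz_mem k).1; have h2 := (hz_mem k).2
    nlinarith
  have hGm_ne : ∀ k, (G m).eval (z k) ≠ 0 := by
    intro k hzero
    have := hkey1 k
    rw [hzero, mul_zero] at this
    have h1 := hz2 k
    have h2 := hlden_ne k
    rcases mul_eq_zero.mp this with h | h
    · rcases mul_eq_zero.mp h with h' | h'
      · linarith
      · exact ha.ne' h'
    · exact h2 h
  -- integral functional
  set F : Polynomial ℝ → ℝ := fun p => ∫ t in (-1:ℝ)..1, p.eval t * BGGw α t with hFdef
  have hFsub : ∀ p q : Polynomial ℝ, F (p - q) = F p - F q := by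
    intro p q
    rw [hFdef]
    simp only
    rw [← intervalIntegral.integral_sub (BGGw_poly_integrable hα p) (BGGw_poly_integrable hα q)]
    apply integral_congr; intro t _
    simp only [eval_sub]; ring
  have hFsmul : ∀ (s : ℝ) (p : Polynomial ℝ), F (C s * p) = s * F p := by
    intro s p
    rw [hFdef]
    simp only
    rw [← intervalIntegral.integral_const_mul]
    apply integral_congr; intro t _
    simp only [eval_mul, eval_C]; ring
  have hF_low : ∀ (p : Polynomial ℝ) (N n : ℕ), p.natDegree ≤ N → N < n → F (p * G n) = 0 := by
    intro p N n h1 h2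
    have h0 := BGG_ortho_low hα hG0 hG1 hGrec N p h1 n h2
    rw [hFdef]
    simp only
    rw [← h0]
    apply integral_congr; intro t _
    simp only [eval_mul]
  have hF_pos : 0 < F (G m * G m) := by
    have h0 := BGG_sq_pos hα hG0 hG1 hGrec m
    rw [hFdef]
    simp only
    rw [show (∫ t in (-1:ℝ)..1, (G m * G m).eval t * BGGw α t)
        = ∫ t in (-1:ℝ)..1, ((G m).eval t * (G m).eval t) * BGGw α t from
      integral_congr (fun t _ => by simp only [eval_mul])]
    exact h0
  set am := (G m).leadingCoeff with ham_def
  have ham : 0 < am := (hdeg m).2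
  set h := F (G m * G m) with hh_def
  -- step: F (ℓk k * G m) = am⁻¹ * h
  have h3 : ∀ k, F (ℓk k * G m) = am⁻¹ * h := by
    intro k
    set s : Polynomial ℝ := ℓk k - C am⁻¹ * G m with hs
    have hℓk_deg_eq : (ℓk k).natDegree = m := by
      rw [hℓk]
      simp only
      rw [natDegree_prod _ _ (fun j _ => X_sub_C_ne_zero (z j))]
      simp only [natDegree_X_sub_C]
      rw [Finset.sum_const, smul_eq_mul, mul_one, Finset.card_erase_of_mem (mem_univ k)]
      simp
    have hℓk_monic : (ℓk k).Monic := monic_prod_of_monic _ _ (fun j _ => monic_X_sub_C (z j))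
    have hs_deg : s.natDegree ≤ m - 1 := by
      rw [Polynomial.natDegree_le_iff_coeff_eq_zero]
      intro i hi
      rw [hs, coeff_sub, coeff_C_mul]
      rcases Nat.lt_or_ge m i with hmi | hmi
      · rw [coeff_eq_zero_of_natDegree_lt (by rw [hℓk_deg_eq]; exact hmi),
          coeff_eq_zero_of_natDegree_lt (by rw [(hdeg m).1]; exact hmi), mul_zero, sub_zero]
      · have : i = m := by omega
        subst this
        have h1 : (ℓk k).coeff i = 1 := by
          have h' := hℓk_monic.coeff_natDegree
          rwa [hℓk_deg_eq] at h'
        have h2 : (G i).coeff i = am := by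
          have h' := Polynomial.coeff_natDegree (p := G i)
          rwa [(hdeg i).1] at h'
        rw [h1, h2, inv_mul_cancel₀ ham.ne', sub_self]
    have h0 : F (s * G m) = 0 := hF_low s (m-1) m hs_deg (by omega)
    have hexp : s * G m = ℓk k * G m - C am⁻¹ * (G m * G m) := by rw [hs]; ring
    rw [hexp, hFsub, hFsmul] at h0
    linarith
  -- step: gmk * F (ℓk k) = am⁻¹ * h
  have h4 : ∀ k, (G m).eval (z k) * F (ℓk k) = am⁻¹ * h := by
    intro k
    have hdvd : (X - C (z k)) ∣ (G m - C ((G m).eval (z k))) := by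
      apply dvd_iff_isRoot.mpr
      simp [IsRoot, eval_sub]
    obtain ⟨r, hr⟩ := hdvd
    have hr_deg : r.natDegree ≤ m := by
      by_cases hr0 : r = 0
      · simp [hr0]
      · have hd1 : ((X - C (z k)) * r).natDegree = 1 + r.natDegree := by
          rw [natDegree_mul (X_sub_C_ne_zero _) hr0, natDegree_X_sub_C]
        have hd2 : (G m - C ((G m).eval (z k))).natDegree ≤ m := by
          refine le_trans (natDegree_sub_le _ _) (max_le (le_of_eq (hdeg m).1) ?_)
          simp
        rw [hr, hd1] at hd2
        omega
    have hpolyid : ℓk k * (G m - C ((G m).eval (z k))) = (C a⁻¹ * r) * G (m+1) := by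
      have h5 : ℓk k * ((X - C (z k)) * r) = ℓfull * r := by
        rw [hℓsplit k]; ring
      have hCa : (C a⁻¹ : Polynomial ℝ) * C a = 1 := by
        rw [← C_mul, inv_mul_cancel₀ ha.ne', map_one]
      have h6 : (C a⁻¹ * r) * (C a * ℓfull) = ℓfull * r := by
        calc (C a⁻¹ * r) * (C a * ℓfull) = (C a⁻¹ * C a) * (ℓfull * r) := by ring
          _ = ℓfull * r := by rw [hCa, one_mul]
      rw [hr, hfact, h6]
      exact h5
    have h0 : F ((C a⁻¹ * r) * G (m+1)) = 0 :=
      hF_low _ m (m+1) (le_trans (natDegree_C_mul_le _ _) hr_deg) (by omega)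
    rw [← hpolyid] at h0
    have hexp : ℓk k * (G m - C ((G m).eval (z k)))
        = ℓk k * G m - C ((G m).eval (z k)) * ℓk k := by ring
    rw [hexp, hFsub, hFsmul] at h0
    rw [h3 k] at h0
    linarith
  have hh_pos : 0 < h := hF_pos
  -- w in terms of F
  have hwF : ∀ k, w k = (lden k)⁻¹ * F (ℓk k) := by
    intro k
    have hthis : w k = F (L k) := by rw [hw k, hFdef]; rfl
    rw [hthis, hL_explicit k, hFsmul]
  have hCst_eq : ∀ k, ((1 - (z k)^2) * a * (lden k)^2) * w k = ((m:ℝ)+1) * (am⁻¹ * h) := by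
    intro k
    rw [hwF k]
    have e3 : (lden k)^2 * ((lden k)⁻¹ * F (ℓk k)) = lden k * F (ℓk k) := by
      field_simp [hlden_ne k]
    have e1 := hkey1 k
    have e2 := h4 k
    calc ((1 - (z k)^2) * a * (lden k)^2) * ((lden k)⁻¹ * F (ℓk k))
        = ((1 - (z k)^2) * a) * ((lden k)^2 * ((lden k)⁻¹ * F (ℓk k))) := by ring
      _ = ((1 - (z k)^2) * a) * (lden k * F (ℓk k)) := by rw [e3]
      _ = ((1 - (z k)^2) * a * lden k) * F (ℓk k) := by ring
      _ = (((m:ℝ)+1) * (G m).eval (z k)) * F (ℓk k) := by rw [e1]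
      _ = ((m:ℝ)+1) * ((G m).eval (z k) * F (ℓk k)) := by ring
      _ = ((m:ℝ)+1) * (am⁻¹ * h) := by rw [e2]
  set Cst := (((m:ℝ)+1) * (am⁻¹ * h)) / a with hCst_def
  have hCst_pos : 0 < Cst := by
    rw [hCst_def]
    have hm1 : (0:ℝ) < (m:ℝ) + 1 := by positivity
    positivity
  have hw2 : ∀ k, (1 - (z k)^2) * w k = Cst / (lden k)^2 := by
    intro k
    have h0 := hCst_eq k
    have hld : (lden k)^2 ≠ 0 := pow_ne_zero 2 (hlden_ne k)
    rw [hCst_def, div_div, eq_div_iff (mul_ne_zero ha.ne' hld)]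
    linear_combination h0
  have hwpos : ∀ k, 0 < w k := by
    intro k
    have h1 := hw2 k
    have h2 : 0 < Cst / (lden k)^2 :=
      div_pos hCst_pos (pow_two_pos_of_ne_zero (hlden_ne k))
    nlinarith [hz2 k, h1, h2]
  -- ξ formula
  have hξk : ∀ k, ξ k = (-1:ℝ)^(k:ℕ) * (Real.sqrt Cst / |lden k|) := by
    intro k
    rw [hξ k, Real.sin_arccos]
    rw [← Real.sqrt_mul (by nlinarith [hz2 k] : (0:ℝ) ≤ 1 - (z k)^2)]
    rw [hw2 k, Real.sqrt_div hCst_pos.le, Real.sqrt_sq_eq_abs]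
  -- sign of lden
  have hsign : ∀ k : Fin (m+1), (-1:ℝ)^(m - (k:ℕ)) * lden k = |lden k| := by
    intro k
    have hprodpos : 0 < ∏ j ∈ univ.erase k, ((if k < j then (-1:ℝ) else 1) * (z k - z j)) := by
      apply Finset.prod_pos
      intro j hj
      have hjk : j ≠ k := Finset.ne_of_mem_erase hj
      rcases lt_or_gt_of_ne hjk with hlt | hgt
      · rw [if_neg (by exact fun hc => absurd (lt_trans hc hlt) (lt_irrefl _) : ¬ k < j), one_mul]
        have := hz_mono hlt
        linarith
      · rw [if_pos hgt]
        have := hz_mono hgt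
        nlinarith
    have hsplit2 : ∏ j ∈ univ.erase k, ((if k < j then (-1:ℝ) else 1) * (z k - z j))
        = (∏ j ∈ univ.erase k, (if k < j then (-1:ℝ) else 1)) * lden k := by
      rw [hlden, Finset.prod_mul_distrib]
    have hsignprod : (∏ j ∈ univ.erase k, (if k < j then (-1:ℝ) else 1))
        = (-1:ℝ)^(m - (k:ℕ)) := by
      rw [Finset.prod_ite, Finset.prod_const, Finset.prod_const, one_pow, mul_one]
      congr 1
      have : (univ.erase k).filter (fun j => k < j) = Finset.Ioi k := by
        ext j
        simp only [Finset.mem_filter, Finset.mem_erase, Finset.mem_Ioi]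
        exact ⟨fun hh => hh.2, fun hh => ⟨⟨ne_of_gt hh, Finset.mem_univ j⟩, hh⟩⟩
      rw [this, Fin.card_Ioi]
      omega
    have hpos2 : 0 < (-1:ℝ)^(m - (k:ℕ)) * lden k := by
      rw [← hsignprod, ← hsplit2]
      exact hprodpos
    have habs : |(-1:ℝ)^(m - (k:ℕ)) * lden k| = |lden k| := by
      rw [abs_mul, abs_pow, abs_neg, abs_one, one_pow, one_mul]
    rw [← habs, abs_of_pos hpos2]
  -- the constant
  set c := (-1:ℝ)^m * Real.sqrt Cst with hc_def
  have hc_ne : c ≠ 0 := by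
    rw [hc_def]
    exact mul_ne_zero (pow_ne_zero _ (by norm_num)) (Real.sqrt_pos.mpr hCst_pos).ne'
  have hξc : ∀ k, ξ k * lden k = c := by
    intro k
    have hk_le : (k:ℕ) ≤ m := Nat.lt_succ_iff.mp k.isLt
    have habs_ne : |lden k| ≠ 0 := abs_ne_zero.mpr (hlden_ne k)
    have hsq : ((-1:ℝ)^(m - (k:ℕ)))^2 = 1 := by
      rw [← pow_mul, mul_comm, pow_mul]
      norm_num
    have hldeq : lden k = (-1:ℝ)^(m - (k:ℕ)) * |lden k| := by
      calc lden k = ((-1:ℝ)^(m - (k:ℕ)))^2 * lden k := by rw [hsq, one_mul]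
        _ = (-1:ℝ)^(m - (k:ℕ)) * ((-1:ℝ)^(m - (k:ℕ)) * lden k) := by ring
        _ = (-1:ℝ)^(m - (k:ℕ)) * |lden k| := by rw [hsign k]
    rw [hξk k, ← hsign k, hc_def]
    have hpow : (-1:ℝ)^(k:ℕ) * (-1:ℝ)^(m - (k:ℕ)) = (-1:ℝ)^m := by
      rw [← pow_add]
      congr 1
      omega
    have hsq' : (-1:ℝ)^(m - (k:ℕ)) * (-1:ℝ)^(m - (k:ℕ)) = 1 := by rw [← sq]; exact hsq
    rw [BGG_aux_sign _ _ _ _ hsq' (hlden_ne k)]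
    calc (-1:ℝ)^(k:ℕ) * (-1:ℝ)^(m-(k:ℕ)) * Real.sqrt Cst
        = ((-1:ℝ)^(k:ℕ) * (-1:ℝ)^(m-(k:ℕ))) * Real.sqrt Cst := by ring
      _ = (-1:ℝ)^m * Real.sqrt Cst := by rw [hpow]
  have hξ_eq : ∀ k, ξ k = c / lden k := by
    intro k
    rw [eq_div_iff (hlden_ne k), hξc k]
  -- polynomial sum identities
  have hsumL : (∑ j : Fin (m+1), L j) = 1 := by
    have hD : (∑ j : Fin (m+1), L j) - 1 = 0 := by
      apply hvanish
      · refine le_trans (natDegree_sub_le _ _) (max_le ?_ (by simp))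
        exact natDegree_sum_le_of_forall_le _ _ (fun j _ => hL_deg j)
      · intro i
        rw [eval_sub, eval_finset_sum, eval_one]
        simp only [hL_eval]
        rw [Finset.sum_ite_eq univ i (fun _ => (1:ℝ)), if_pos (Finset.mem_univ i)]
        ring
    exact sub_eq_zero.mp hD
  have hPsum : P = ∑ i : Fin (m+1), C (f (z i)) * L i := by
    have hD : P - (∑ i : Fin (m+1), C (f (z i)) * L i) = 0 := by
      apply hvanish
      · refine le_trans (natDegree_sub_le _ _) (max_le hP_deg ?_)
        exact natDegree_sum_le_of_forall_le _ _
          (fun j _ => le_trans (natDegree_C_mul_le _ _) (hL_deg j))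
      · intro i
        rw [eval_sub, eval_finset_sum, hP_interp i]
        simp only [eval_mul, eval_C, hL_eval]
        rw [Finset.sum_congr rfl (fun j _ => by rw [mul_ite, mul_one, mul_zero]),
          Finset.sum_ite_eq univ i (fun j => f (z j)), if_pos (Finset.mem_univ i)]
        ring
    exact sub_eq_zero.mp hD
  -- final
  intro y hy
  have hy_ne : ∀ j, y - z j ≠ 0 := by
    intro j
    refine sub_ne_zero.mpr (fun hc => hy ?_)
    exact ⟨j, hc.symm⟩
  set ℓy := ∏ j : Fin (m+1), (y - z j) with hℓy
  have hℓy_ne : ℓy ≠ 0 := Finset.prod_ne_zero_iff.mpr (fun j _ => hy_ne j)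
  have hLy : ∀ j, (L j).eval y = (lden j)⁻¹ * ∏ i ∈ univ.erase j, (y - z i) := by
    intro j
    rw [hL_explicit j, eval_mul, eval_C, hℓk]
    simp only [eval_prod, eval_sub, eval_X, eval_C]
  have hprody : ∀ j : Fin (m+1), (y - z j) * ∏ i ∈ univ.erase j, (y - z i) = ℓy := by
    intro j
    rw [hℓy]
    exact Finset.mul_prod_erase univ (fun i => y - z i) (Finset.mem_univ j)
  have hkey2 : ∀ j, ξ j / (y - z j) = c * ((L j).eval y / ℓy) := by
    intro j
    have hpe : (∏ i ∈ univ.erase j, (y - z i)) ≠ 0 :=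
      Finset.prod_ne_zero_iff.mpr (fun i _ => hy_ne i)
    rw [hξ_eq j, hLy j, ← hprody j]
    exact BGG_aux_div c (lden j) (y - z j) _ (hlden_ne j) (hy_ne j) hpe
  have hsum_eval : ∑ j : Fin (m+1), (L j).eval y = 1 := by
    have hh := congrArg (eval y) hsumL
    rwa [eval_finset_sum, eval_one] at hh
  have hP_eval : P.eval y = ∑ i : Fin (m+1), f (z i) * (L i).eval y := by
    have hh := congrArg (eval y) hPsum
    rw [eval_finset_sum] at hh
    simp only [eval_mul, eval_C] at hh
    exact hh
  have hden : (∑ j : Fin (m+1), ξ j / (y - z j)) = c / ℓy := by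
    rw [Finset.sum_congr rfl (fun j _ => hkey2 j), ← Finset.mul_sum, ← Finset.sum_div,
      hsum_eval, mul_one_div]
  have hdenne : c / ℓy ≠ 0 := div_ne_zero hc_ne hℓy_ne
  constructor
  · rw [hden]; exact hdenne
  · have hnum : (∑ i : Fin (m+1), f (z i) * (ξ i / (y - z i))) = (c / ℓy) * P.eval y := by
      rw [Finset.sum_congr rfl (fun i _ => by rw [hkey2 i]), hP_eval, Finset.mul_sum]
      apply Finset.sum_congr rfl
      intro i _
      ring
    rw [hden, hnum]
    exact (mul_div_cancel_left₀ _ hdenne).symm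
end

section
/- Let α ≥ 0 and m ∈ ℤ⁺, let z_0 < ⋯ < z_m be the zeros of G_{m+1}^{(α)} (all lying in (−1,1)) with Lagrange basis polynomials ℓ_i. If f ∈ C^{m+1}[−1, 1] with ‖f^{(m+1)}‖_{L^∞[−1,1]} ≤ A for some A > 0, then for every x ∈ [−1, 1]: |∫_{−1}^{x} f(t) dt − Σ_{i=0}^{m} (∫_{−1}^{x} ℓ_i(t) dt) · f(z_i)| ≤ A · 2^{−m} · (x + 1) · Γ(α + 1) Γ(m + 2α + 1) / (Γ(2α + 1) Γ(m + 2) Γ(m + α + 1)). -/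
open Polynomial Set

lemma contDiff_polyeval (p : Polynomial ℝ) {n : ℕ∞} : ContDiff ℝ n fun x : ℝ => p.eval x := by
  have h : (fun x : ℝ => p.eval x)
      = fun x => ∑ i ∈ Finset.range (p.natDegree + 1), p.coeff i * x ^ i :=
    funext fun x => eval_eq_sum_range x
  rw [h]
  exact ContDiff.sum fun i _ => contDiff_const.mul (contDiff_id.pow i)

lemma polyeval_iteratedDerivWithin (n : ℕ) (q : Polynomial ℝ) {s : Set ℝ}
    (hs : UniqueDiffOn ℝ s) :
    ∀ x ∈ s, iteratedDerivWithin n (fun t => q.eval t) s x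
      = (Polynomial.derivative^[n] q).eval x := by
  induction n generalizing q with
  | zero => intro x hx; simp
  | succ n ih =>
    intro x hx
    rw [iteratedDerivWithin_succ']
    have hcg : Set.EqOn (derivWithin (fun t => q.eval t) s)
        (fun t => (Polynomial.derivative q).eval t) s :=
      fun y hy => q.derivWithin (hs y hy)
    rw [iteratedDerivWithin_congr hcg hx, ih (Polynomial.derivative q) x hx,
      Function.iterate_succ_apply]

lemma iterate_derivative_add' (n : ℕ) (a b : Polynomial ℝ) :
    Polynomial.derivative^[n] (a + b)
      = Polynomial.derivative^[n] a + Polynomial.derivative^[n] b := by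
  induction n generalizing a b with
  | zero => simp
  | succ n ih => simp [Function.iterate_succ_apply, derivative_add, ih]

lemma iter_rolle : ∀ (n : ℕ) (g : ℝ → ℝ), ContDiffOn ℝ n g (Set.Icc (-1:ℝ) 1) →
    ∀ z : Fin (n+1) → ℝ, StrictMono z → (∀ i, z i ∈ Set.Icc (-1:ℝ) 1) →
    (∀ i, g (z i) = 0) →
    ∃ ξ ∈ Set.Icc (-1:ℝ) 1, iteratedDerivWithin n g (Set.Icc (-1:ℝ) 1) ξ = 0 := by
  intro n
  induction n with
  | zero =>
    intro g _ z _ hmem hzero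
    exact ⟨z 0, hmem 0, by simpa using hzero 0⟩
  | succ n ih =>
    intro g hg z hmono hmem hzero
    have hs : UniqueDiffOn ℝ (Set.Icc (-1:ℝ) 1) := uniqueDiffOn_Icc (by norm_num)
    have hcont : ContinuousOn g (Set.Icc (-1:ℝ) 1) := hg.continuousOn
    have key : ∀ i : Fin (n+1), ∃ w, w ∈ Set.Ioo (z i.castSucc) (z i.succ) ∧ deriv g w = 0 := by
      intro i
      have hlt : z i.castSucc < z i.succ := hmono (Fin.castSucc_lt_succ (i := i))
      have hsub : Set.Icc (z i.castSucc) (z i.succ) ⊆ Set.Icc (-1:ℝ) 1 :=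
        Set.Icc_subset_Icc (hmem _).1 (hmem _).2
      exact exists_deriv_eq_zero hlt (hcont.mono hsub) ((hzero _).trans (hzero _).symm)
    choose w hw hw0 using key
    have hwmono : StrictMono w := by
      rw [Fin.strictMono_iff_lt_succ]
      intro i
      have h1 : w i.castSucc < z i.castSucc.succ := (hw i.castSucc).2
      have h2 : z i.succ.castSucc < w i.succ := (hw i.succ).1
      rw [Fin.succ_castSucc] at h1
      exact h1.trans h2
    have hwIoo : ∀ i, w i ∈ Set.Ioo (-1:ℝ) 1 := by
      intro i
      exact ⟨lt_of_le_of_lt (hmem i.castSucc).1 (hw i).1,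
        lt_of_lt_of_le (hw i).2 (hmem i.succ).2⟩
    have hwmem : ∀ i, w i ∈ Set.Icc (-1:ℝ) 1 := fun i => Set.Ioo_subset_Icc_self (hwIoo i)
    have hzero' : ∀ i, derivWithin g (Set.Icc (-1:ℝ) 1) (w i) = 0 := by
      intro i
      have hn : Set.Icc (-1:ℝ) 1 ∈ nhds (w i) := Icc_mem_nhds (hwIoo i).1 (hwIoo i).2
      rw [derivWithin_of_mem_nhds hn]
      exact hw0 i
    have hg' : ContDiffOn ℝ n (derivWithin g (Set.Icc (-1:ℝ) 1)) (Set.Icc (-1:ℝ) 1) :=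
      hg.derivWithin hs (by exact_mod_cast le_refl _)
    obtain ⟨ξ, hξ, h0⟩ := ih (derivWithin g (Set.Icc (-1:ℝ) 1)) hg' w hwmono hwmem hzero'
    exact ⟨ξ, hξ, by rw [iteratedDerivWithin_succ']; exact h0⟩

lemma gamma_shift (c : ℝ) (hc : 0 ≤ c) : ∀ m : ℕ,
    Real.Gamma ((m:ℝ) + c + 1)
      = (∏ j ∈ Finset.range m, (c + (j:ℝ) + 1)) * Real.Gamma (c + 1) := by
  intro m
  induction m with
  | zero => simp
  | succ n ih =>
    have h : ((n+1:ℕ):ℝ) + c + 1 = ((n:ℝ) + c + 1) + 1 := by push_cast; ring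
    rw [h, Real.Gamma_add_one (by positivity), ih, Finset.prod_range_succ]
    ring

lemma geg_bound (α : ℝ) (hα : 0 ≤ α) (G : ℕ → Polynomial ℝ)
    (hG0 : G 0 = 1) (hG1 : G 1 = Polynomial.X)
    (hGrec : ∀ k : ℕ, 1 ≤ k →
      Polynomial.C ((k : ℝ) + 2 * α) * G (k + 1) =
        Polynomial.C (2 * ((k : ℝ) + α)) * (Polynomial.X * G k) -
          Polynomial.C (k : ℝ) * G (k - 1)) :
    ∀ n, ∀ x ∈ Set.Icc (-1:ℝ) 1, |(G (n+1)).eval x| ≤ 1 := by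
  have hQ : ∀ n, ∀ x : ℝ,
      ((G n).eval x)^2 + ((G (n+1)).eval x)^2 - 2*x*((G n).eval x)*((G (n+1)).eval x)
        ≤ 1 - x^2 := by
    intro n
    induction n with
    | zero =>
      intro x
      simp only [hG0, hG1, eval_one, eval_X]
      nlinarith [sq_nonneg x]
    | succ n ih =>
      intro x
      have E := congrArg (Polynomial.eval x) (hGrec (n+1) (Nat.le_add_left 1 n))
      simp only [eval_mul, eval_sub, eval_C, eval_X, Nat.add_sub_cancel] at E
      push_cast at E
      set u := (G n).eval x with hu
      set v := (G (n+1)).eval x with hv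
      set wv := (G (n+2)).eval x with hwv
      have hc : (0:ℝ) < (n:ℝ)+1+2*α := by positivity
      set b : ℝ := ((n:ℝ)+1)/((n:ℝ)+1+2*α) with hb
      have hb0 : 0 < b := by positivity
      have hb1 : b ≤ 1 := by
        rw [hb, div_le_one hc]; linarith
      have hw2 : wv = (1+b)*(x*v) - b*u := by
        rw [hb]
        field_simp
        linear_combination E
      have key : v^2 + wv^2 - 2*x*v*wv
          = (u^2 + v^2 - 2*x*u*v) + (b^2-1)*(u-x*v)^2 := by
        rw [hw2]; ring
      have hneg : (b^2-1)*(u-x*v)^2 ≤ 0 :=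
        mul_nonpos_of_nonpos_of_nonneg (by nlinarith) (sq_nonneg _)
      have := ih x
      linarith [key, hneg, this]
  intro n x hx
  have hIoo : ∀ y ∈ Set.Ioo (-1:ℝ) 1, ((G (n+1)).eval y)^2 ≤ 1 := by
    intro y hy
    have h1 := hQ n y
    have hy2 : y^2 < 1 := by nlinarith [hy.1, hy.2]
    nlinarith [sq_nonneg ((G n).eval y - y * (G (n+1)).eval y)]
  have hclosed : IsClosed {y : ℝ | ((G (n+1)).eval y)^2 ≤ 1} :=
    isClosed_le (((G (n+1)).continuous).pow 2) continuous_const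
  have hsub : Set.Icc (-1:ℝ) 1 ⊆ {y : ℝ | ((G (n+1)).eval y)^2 ≤ 1} := by
    rw [← closure_Ioo (by norm_num : (-1:ℝ) ≠ 1)]
    exact closure_minimal hIoo hclosed
  have hsq : ((G (n+1)).eval x)^2 ≤ 1 := hsub hx
  rw [abs_le]
  constructor <;> nlinarith [hsq]

lemma geg_facts (α : ℝ) (hα : 0 ≤ α) (G : ℕ → Polynomial ℝ)
    (hG0 : G 0 = 1) (hG1 : G 1 = Polynomial.X)
    (hGrec : ∀ k : ℕ, 1 ≤ k →
      Polynomial.C ((k : ℝ) + 2 * α) * G (k + 1) =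
        Polynomial.C (2 * ((k : ℝ) + α)) * (Polynomial.X * G k) -
          Polynomial.C (k : ℝ) * G (k - 1)) :
    ∀ n : ℕ, (G n).natDegree = n ∧
      (G n).leadingCoeff = ∏ j ∈ Finset.range (n-1), (2*((j:ℝ)+1+α)/((j:ℝ)+1+2*α)) := by
  have hKpos : ∀ k : ℕ, (0:ℝ) < ∏ j ∈ Finset.range k, (2*((j:ℝ)+1+α)/((j:ℝ)+1+2*α)) := by
    intro k
    apply Finset.prod_pos
    intro j _
    have h1 : (0:ℝ) < (j:ℝ)+1+α := by positivity
    have h2 : (0:ℝ) < (j:ℝ)+1+2*α := by positivity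
    positivity
  have main : ∀ n : ℕ,
      ((G n).natDegree = n ∧
        (G n).leadingCoeff = ∏ j ∈ Finset.range (n-1), (2*((j:ℝ)+1+α)/((j:ℝ)+1+2*α))) ∧
      ((G (n+1)).natDegree = n+1 ∧
        (G (n+1)).leadingCoeff = ∏ j ∈ Finset.range n, (2*((j:ℝ)+1+α)/((j:ℝ)+1+2*α))) := by
    intro n
    induction n with
    | zero =>
      refine ⟨⟨by simp [hG0], by simp [hG0]⟩, ⟨by simp [hG1], by simp [hG1]⟩⟩
    | succ n ih =>
      obtain ⟨⟨hd0, hl0⟩, hd1, hl1⟩ := ih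
      refine ⟨⟨hd1, by simpa using hl1⟩, ?_⟩
      have hc : (0:ℝ) < (n:ℝ)+1+2*α := by positivity
      have ha : (0:ℝ) < 2*((n:ℝ)+1+α) := by positivity
      have E := hGrec (n+1) (Nat.le_add_left 1 n)
      push_cast at E
      -- G (n+1+1) = C c⁻¹ * (T1 - T2)
      have hGn1ne : G (n+1) ≠ 0 := by
        intro h
        rw [h] at hd1
        simp at hd1
      have hGnne : G n ≠ 0 := by
        intro h
        rw [h] at hl0
        have := hKpos (n-1)
        rw [← hl0] at this
        simp at this
      set T1 : Polynomial ℝ := Polynomial.C (2*((n:ℝ)+1+α)) * (Polynomial.X * G (n+1)) with hT1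
      set T2 : Polynomial ℝ := Polynomial.C ((n:ℝ)+1) * G n with hT2
      have hE2 : G (n+1+1) = Polynomial.C ((n:ℝ)+1+2*α)⁻¹ * (T1 - T2) := by
        have := congrArg (fun q => Polynomial.C ((n:ℝ)+1+2*α)⁻¹ * q) E
        rw [← mul_assoc, ← Polynomial.C_mul, inv_mul_cancel₀ hc.ne', Polynomial.C_1, one_mul]
          at this
        convert this using 2 <;> ring_nf
      have hT1ne : T1 ≠ 0 := by
        rw [hT1]
        apply mul_ne_zero (Polynomial.C_ne_zero.mpr ha.ne')
        exact mul_ne_zero Polynomial.X_ne_zero hGn1ne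
      have hT1deg : T1.natDegree = n + 2 := by
        rw [hT1, Polynomial.natDegree_C_mul ha.ne', Polynomial.natDegree_mul
          Polynomial.X_ne_zero hGn1ne, Polynomial.natDegree_X, hd1]
        omega
      have hT1lc : T1.leadingCoeff
          = 2*((n:ℝ)+1+α) * ∏ j ∈ Finset.range n, (2*((j:ℝ)+1+α)/((j:ℝ)+1+2*α)) := by
        rw [hT1, Polynomial.leadingCoeff_mul, Polynomial.leadingCoeff_mul,
          Polynomial.leadingCoeff_C, Polynomial.leadingCoeff_X, one_mul, hl1]
      have hT2deg : T2.natDegree ≤ n := le_trans (Polynomial.natDegree_C_mul_le _ _) hd0.le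
      have hdlt : T2.degree < T1.degree := by
        calc T2.degree ≤ (T2.natDegree : WithBot ℕ) := Polynomial.degree_le_natDegree
        _ ≤ (n : WithBot ℕ) := by exact_mod_cast hT2deg
        _ < ((n+2 : ℕ) : WithBot ℕ) := by exact_mod_cast (by omega : n < n + 2)
        _ = T1.degree := by rw [Polynomial.degree_eq_natDegree hT1ne, hT1deg]
      have hsubdeg : (T1 - T2).natDegree = n + 2 := by
        rw [Polynomial.natDegree_eq_of_degree_eq
          (Polynomial.degree_sub_eq_left_of_degree_lt hdlt), hT1deg]
      have hsublc : (T1 - T2).leadingCoeff = T1.leadingCoeff :=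
        Polynomial.leadingCoeff_sub_of_degree_lt hdlt
      constructor
      · rw [hE2, Polynomial.natDegree_C_mul (inv_ne_zero hc.ne'), hsubdeg]
      · rw [hE2, Polynomial.leadingCoeff, Polynomial.natDegree_C_mul (inv_ne_zero hc.ne'),
          Polynomial.coeff_C_mul, ← Polynomial.leadingCoeff, hsublc, hT1lc,
          Finset.prod_range_succ]
        field_simp
  intro n
  exact (main n).1



/-- **Error bound of the optimal Gegenbauer quadrature at an arbitrary node, `α ≥ 0`.**
Let `α ≥ 0`, `m ∈ ℤ⁺`, let `z 0 < ⋯ < z m` be the zeros of `G (m+1)` (all in `(-1,1)`)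
with Lagrange basis polynomials `ℓ i`. If `f ∈ C^{m+1}[-1,1]` with `‖f^{(m+1)}‖_∞ ≤ A`,
then for every `x ∈ [-1,1]`:
`|∫_{-1}^{x} f - ∑ i, (∫_{-1}^{x} ℓ i) f(z i)|
   ≤ A 2^{-m} (x+1) Γ(α+1) Γ(m+2α+1) / (Γ(2α+1) Γ(m+2) Γ(m+α+1))`. -/
theorem gegenbauer_quadrature_bound_arbitrary_node_nonneg_alpha
    (α : ℝ) (hα : 0 ≤ α) (m : ℕ) (hm : 1 ≤ m)
    (G : ℕ → Polynomial ℝ)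
    (hG0 : G 0 = 1) (hG1 : G 1 = Polynomial.X)
    (hGrec : ∀ k : ℕ, 1 ≤ k →
      Polynomial.C ((k : ℝ) + 2 * α) * G (k + 1) =
        Polynomial.C (2 * ((k : ℝ) + α)) * (Polynomial.X * G k) -
          Polynomial.C (k : ℝ) * G (k - 1))
    (z : Fin (m + 1) → ℝ)
    (hz_mono : StrictMono z)
    (hz_mem : ∀ i, z i ∈ Set.Ioo (-1 : ℝ) 1)
    (hz_root : ∀ y : ℝ, (G (m + 1)).eval y = 0 ↔ ∃ i, y = z i)
    (ℓ : Fin (m + 1) → Polynomial ℝ)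
    (hℓ_deg : ∀ k, (ℓ k).natDegree ≤ m)
    (hℓ_eval : ∀ k j, (ℓ k).eval (z j) = if j = k then (1 : ℝ) else 0)
    (f : ℝ → ℝ)
    (hf : ContDiffOn ℝ (m + 1 : ℕ) f (Set.Icc (-1 : ℝ) 1))
    (A : ℝ) (hA : 0 < A)
    (hbound : ∀ t ∈ Set.Icc (-1 : ℝ) 1,
      |iteratedDerivWithin (m + 1) f (Set.Icc (-1 : ℝ) 1) t| ≤ A) :
    ∀ x ∈ Set.Icc (-1 : ℝ) 1,
      |(∫ t in (-1 : ℝ)..x, f t) -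
          ∑ i : Fin (m + 1), (∫ t in (-1 : ℝ)..x, (ℓ i).eval t) * f (z i)| ≤
        A * (2 : ℝ) ^ (-(m : ℤ)) * (x + 1) *
          Real.Gamma (α + 1) * Real.Gamma ((m : ℝ) + 2 * α + 1) /
            (Real.Gamma (2 * α + 1) * Real.Gamma ((m : ℝ) + 2) *
              Real.Gamma ((m : ℝ) + α + 1)) := by
  intro x hx
  have hs : UniqueDiffOn ℝ (Set.Icc (-1:ℝ) 1) := uniqueDiffOn_Icc (by norm_num)
  have hfac : (0:ℝ) < (Nat.factorial (m+1) : ℝ) := by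
    exact_mod_cast Nat.factorial_pos (m+1)
  -- the leading coefficient
  set K : ℝ := ∏ j ∈ Finset.range m, (2*((j:ℝ)+1+α)/((j:ℝ)+1+2*α)) with hKdef
  have hK : 0 < K := by
    apply Finset.prod_pos
    intro j _
    have h1 : (0:ℝ) < (j:ℝ)+1+α := by positivity
    have h2 : (0:ℝ) < (j:ℝ)+1+2*α := by positivity
    positivity
  -- nodal polynomial
  set ω : Polynomial ℝ := ∏ i : Fin (m+1), (Polynomial.X - Polynomial.C (z i)) with hωdef
  have hωmonic : ω.Monic := monic_prod_of_monic _ _ (fun i _ => monic_X_sub_C (z i))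
  have hωdeg : ω.natDegree = m + 1 := by
    rw [hωdef, Polynomial.natDegree_prod _ _ (fun i _ => Polynomial.X_sub_C_ne_zero (z i))]
    simp [Polynomial.natDegree_X_sub_C]
  have hωz : ∀ i, ω.eval (z i) = 0 := by
    intro i
    rw [hωdef, Polynomial.eval_prod]
    exact Finset.prod_eq_zero (Finset.mem_univ i) (by simp)
  -- G (m+1) = C K * ω
  have hfacts := geg_facts α hα G hG0 hG1 hGrec (m+1)
  have hGdeg : (G (m+1)).natDegree = m+1 := hfacts.1
  have hGlc : (G (m+1)).leadingCoeff = K := by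
    rw [hfacts.2]; simp [hKdef]
  have hGne : G (m+1) ≠ 0 := by
    intro h
    rw [h] at hGlc
    simp at hGlc
    exact hK.ne' hGlc.symm
  have hGeq : G (m+1) = Polynomial.C K * ω := by
    have hCK : (Polynomial.C K * ω) ≠ 0 :=
      mul_ne_zero (Polynomial.C_ne_zero.mpr hK.ne') hωmonic.ne_zero
    have hCKdeg : (Polynomial.C K * ω).natDegree = m+1 := by
      rw [Polynomial.natDegree_C_mul hK.ne', hωdeg]
    have hCKlc : (Polynomial.C K * ω).leadingCoeff = K := by
      rw [Polynomial.leadingCoeff_mul, Polynomial.leadingCoeff_C, hωmonic.leadingCoeff, mul_one]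
    have hdegeq : (G (m+1)).degree = (Polynomial.C K * ω).degree := by
      rw [Polynomial.degree_eq_natDegree hGne, Polynomial.degree_eq_natDegree hCK,
        hGdeg, hCKdeg]
    set d : Polynomial ℝ := G (m+1) - Polynomial.C K * ω with hd
    rcases eq_or_ne d 0 with h0 | h0
    · have := sub_eq_zero.mp h0
      exact this
    · exfalso
      have hdlt : d.degree < ((m+1 : ℕ) : WithBot ℕ) := by
        have := Polynomial.degree_sub_lt hdegeq hGne (by rw [hGlc, hCKlc])
        rwa [Polynomial.degree_eq_natDegree hGne, hGdeg] at this
      have hdnat : d.natDegree < m+1 := (Polynomial.natDegree_lt_iff_degree_lt h0).mpr hdlt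
      have heval : ∀ i : Fin (m+1), d.eval (z i) = 0 := by
        intro i
        rw [hd]
        simp [Polynomial.eval_sub, (hz_root (z i)).mpr ⟨i, rfl⟩, hωz i]
      have := Polynomial.eq_zero_of_natDegree_lt_card_of_eval_eq_zero d hz_mono.injective
        heval (by simpa using hdnat)
      exact h0 this
  -- sup bound for ω on [-1,1]
  have hωb : ∀ t ∈ Set.Icc (-1:ℝ) 1, |ω.eval t| ≤ 1 / K := by
    intro t ht
    have h1 := geg_bound α hα G hG0 hG1 hGrec m t ht
    rw [hGeq] at h1
    rw [Polynomial.eval_mul, Polynomial.eval_C, abs_mul, abs_of_pos hK] at h1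
    rw [le_div_iff₀ hK]
    linarith [h1]
  -- interpolating polynomial
  set p : Polynomial ℝ := ∑ i : Fin (m+1), Polynomial.C (f (z i)) * ℓ i with hpdef
  have hpdeg : p.natDegree ≤ m :=
    Polynomial.natDegree_sum_le_of_forall_le _ _
      (fun i _ => le_trans (Polynomial.natDegree_C_mul_le _ _) (hℓ_deg i))
  have hpz : ∀ j, p.eval (z j) = f (z j) := by
    intro j
    rw [hpdef, Polynomial.eval_finset_sum]
    simp only [Polynomial.eval_mul, Polynomial.eval_C, hℓ_eval]
    rw [Finset.sum_eq_single j]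
    · simp
    · intro i _ hij
      simp [Ne.symm hij]
    · intro h
      exact absurd (Finset.mem_univ j) h
  -- Lagrange remainder bound
  have hrem : ∀ t ∈ Set.Icc (-1:ℝ) 1,
      |f t - p.eval t| ≤ A / (Nat.factorial (m+1) : ℝ) * |ω.eval t| := by
    intro t ht
    by_cases h0 : ω.eval t = 0
    · have h0' : ∏ i : Fin (m+1), (t - z i) = 0 := by
        rw [hωdef] at h0
        rw [Polynomial.eval_prod] at h0
        simpa using h0
      obtain ⟨i, -, hi⟩ := Finset.prod_eq_zero_iff.mp h0'
      have hti : t = z i := by linarith [sub_eq_zero.mp hi]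
      rw [hti, hpz i, sub_self, abs_zero]
      positivity
    · set c : ℝ := (f t - p.eval t) / ω.eval t with hcdef
      set q : Polynomial ℝ := p + Polynomial.C c * ω with hq
      have hqc : ContDiff ℝ ((m+1:ℕ) : ℕ∞) fun u : ℝ => q.eval u := contDiff_polyeval q
      have hg : ContDiffOn ℝ ((m+1:ℕ)) (f - fun u => q.eval u) (Set.Icc (-1:ℝ) 1) :=
        hf.sub hqc.contDiffOn
      have htne : ∀ i : Fin (m+1), t ≠ z i := by
        intro i hti
        exact h0 (hti ▸ hωz i)
      set S : Finset ℝ := insert t (Finset.image z Finset.univ) with hS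
      have hnot : t ∉ Finset.image z Finset.univ := by
        simp only [Finset.mem_image, Finset.mem_univ, true_and]
        rintro ⟨i, hi⟩
        exact htne i hi.symm
      have hcard : S.card = m + 2 := by
        rw [hS, Finset.card_insert_of_notMem hnot,
          Finset.card_image_of_injective _ hz_mono.injective, Finset.card_univ,
          Fintype.card_fin]
      have hmemS : ∀ y ∈ S, y ∈ Set.Icc (-1:ℝ) 1 := by
        intro y hy
        rw [hS] at hy
        rcases Finset.mem_insert.mp hy with h | h
        · rw [h]; exact ht
        · obtain ⟨i, -, hi⟩ := Finset.mem_image.mp h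
          rw [← hi]
          exact Set.Ioo_subset_Icc_self (hz_mem i)
      have hgz : ∀ y ∈ S, (f - fun u => q.eval u) y = 0 := by
        intro y hy
        rw [hS] at hy
        rcases Finset.mem_insert.mp hy with h | h
        · rw [h]
          simp only [Pi.sub_apply]
          rw [hq, Polynomial.eval_add, Polynomial.eval_mul, Polynomial.eval_C, hcdef]
          field_simp
          ring
        · obtain ⟨i, -, hi⟩ := Finset.mem_image.mp h
          rw [← hi]
          simp only [Pi.sub_apply]
          rw [hq, Polynomial.eval_add, Polynomial.eval_mul, Polynomial.eval_C, hωz i, hpz i]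
          ring
      obtain ⟨ξ, hξ, hiter⟩ := iter_rolle (m+1) _ hg (fun i => S.orderEmbOfFin hcard i)
        (S.orderEmbOfFin hcard).strictMono
        (fun i => hmemS _ (Finset.orderEmbOfFin_mem S hcard i))
        (fun i => hgz _ (Finset.orderEmbOfFin_mem S hcard i))
      have hqiter : Polynomial.derivative^[m+1] q
          = Polynomial.C (c * (Nat.factorial (m+1) : ℝ)) := by
        rw [hq, iterate_derivative_add' (m+1) p _]
        have h1 : Polynomial.derivative^[m+1] p = 0 :=
          Polynomial.iterate_derivative_eq_zero (lt_of_le_of_lt hpdeg (Nat.lt_succ_self m))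
        have h2 : Polynomial.derivative^[m+1] (Polynomial.C c * ω)
            = Polynomial.C c * Polynomial.derivative^[m+1] ω :=
          Polynomial.iterate_derivative_C_mul _ _ _
        have hsplit : ω = Polynomial.X^(m+1) + (ω - Polynomial.X^(m+1)) := by ring
        have hr : (ω - Polynomial.X^(m+1)).natDegree < m+1 := by
          rcases eq_or_ne (ω - Polynomial.X^(m+1)) 0 with hz0 | hz0
          · rw [hz0]
            simp
          · refine (Polynomial.natDegree_lt_iff_degree_lt hz0).mpr ?_
            have hdeq : ω.degree = (Polynomial.X^(m+1) : Polynomial ℝ).degree := by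
              rw [Polynomial.degree_eq_natDegree hωmonic.ne_zero, hωdeg,
                Polynomial.degree_X_pow]
            have := Polynomial.degree_sub_lt hdeq hωmonic.ne_zero
              (by rw [Polynomial.Monic.leadingCoeff hωmonic, Polynomial.leadingCoeff_X_pow])
            rwa [Polynomial.degree_eq_natDegree hωmonic.ne_zero, hωdeg] at this
        have h3 : Polynomial.derivative^[m+1] ω
            = Polynomial.C ((Nat.factorial (m+1) : ℝ)) := by
          conv_lhs => rw [hsplit]
          rw [iterate_derivative_add' (m+1) _ _, Polynomial.iterate_derivative_eq_zero hr,
            add_zero, Polynomial.iterate_derivative_X_pow_eq_C_mul]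
          have hdf : (m+1).descFactorial m = (m+1).factorial := by
            rw [← Nat.descFactorial_self (m+1), Nat.descFactorial_succ]
            simp
          simp [Nat.descFactorial_self, hdf]
        rw [h1, h2, h3, zero_add, ← Polynomial.C_mul]
      have heq : iteratedDerivWithin (m+1) (f - fun u => q.eval u) (Set.Icc (-1:ℝ) 1) ξ
          = iteratedDerivWithin (m+1) f (Set.Icc (-1:ℝ) 1) ξ
            - c * (Nat.factorial (m+1) : ℝ) := by
        rw [iteratedDerivWithin_sub hξ hs (hf.contDiffWithinAt hξ) (hqc.contDiffOn.contDiffWithinAt hξ),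
          polyeval_iteratedDerivWithin (m+1) q hs ξ hξ, hqiter]
        simp
      have hceq : c * (Nat.factorial (m+1) : ℝ)
          = iteratedDerivWithin (m+1) f (Set.Icc (-1:ℝ) 1) ξ := by
        rw [heq] at hiter
        linarith
      have hcb : |c| ≤ A / (Nat.factorial (m+1) : ℝ) := by
        rw [le_div_iff₀ hfac]
        calc |c| * (Nat.factorial (m+1) : ℝ)
            = |c * (Nat.factorial (m+1) : ℝ)| := by rw [abs_mul, abs_of_pos hfac]
        _ = |iteratedDerivWithin (m+1) f (Set.Icc (-1:ℝ) 1) ξ| := by rw [hceq]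
        _ ≤ A := hbound ξ hξ
      have hftp : f t - p.eval t = c * ω.eval t := by
        rw [hcdef]
        field_simp
      rw [hftp, abs_mul]
      exact mul_le_mul_of_nonneg_right hcb (abs_nonneg _)
  -- pointwise bound and integral assembly
  have hsum : ∑ i : Fin (m+1), (∫ t in (-1:ℝ)..x, (ℓ i).eval t) * f (z i)
      = ∫ t in (-1:ℝ)..x, p.eval t := by
    have hint : ∀ i : Fin (m+1), IntervalIntegrable (fun t => (ℓ i).eval t * f (z i))
        MeasureTheory.volume (-1) x :=
      fun i => (((ℓ i).continuous).mul continuous_const).continuousOn.intervalIntegrable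
    calc ∑ i : Fin (m+1), (∫ t in (-1:ℝ)..x, (ℓ i).eval t) * f (z i)
        = ∑ i : Fin (m+1), ∫ t in (-1:ℝ)..x, (ℓ i).eval t * f (z i) := by
          refine Finset.sum_congr rfl fun i _ => ?_
          rw [intervalIntegral.integral_mul_const]
    _ = ∫ t in (-1:ℝ)..x, ∑ i : Fin (m+1), (ℓ i).eval t * f (z i) :=
        (intervalIntegral.integral_finset_sum (fun i _ => hint i)).symm
    _ = ∫ t in (-1:ℝ)..x, p.eval t := by
        refine intervalIntegral.integral_congr fun t _ => ?_
        rw [hpdef, Polynomial.eval_finset_sum]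
        refine (Finset.sum_congr rfl fun i _ => ?_).symm
        rw [Polynomial.eval_mul, Polynomial.eval_C]
        ring
  have hxI : Set.uIcc (-1:ℝ) x ⊆ Set.Icc (-1:ℝ) 1 := by
    rw [Set.uIcc_of_le hx.1]
    exact Set.Icc_subset_Icc le_rfl hx.2
  have hfint : IntervalIntegrable f MeasureTheory.volume (-1) x :=
    (hf.continuousOn.mono hxI).intervalIntegrable
  have hpint : IntervalIntegrable (fun t => p.eval t) MeasureTheory.volume (-1) x :=
    (p.continuous_aeval).continuousOn.intervalIntegrable
  have hmain : |(∫ t in (-1:ℝ)..x, f t) -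
      ∑ i : Fin (m+1), (∫ t in (-1:ℝ)..x, (ℓ i).eval t) * f (z i)|
      ≤ (A / (Nat.factorial (m+1) : ℝ) * (1/K)) * (x + 1) := by
    rw [hsum, ← intervalIntegral.integral_sub hfint hpint]
    have hb : ∀ t ∈ Set.uIoc (-1:ℝ) x, ‖f t - p.eval t‖
        ≤ A / (Nat.factorial (m+1) : ℝ) * (1/K) := by
      intro t ht
      have htmem : t ∈ Set.Icc (-1:ℝ) 1 := by
        have : Set.uIoc (-1:ℝ) x ⊆ Set.uIcc (-1:ℝ) x := Set.Ioc_subset_Icc_self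
        exact hxI (this ht)
      calc ‖f t - p.eval t‖ = |f t - p.eval t| := rfl
      _ ≤ A / (Nat.factorial (m+1) : ℝ) * |ω.eval t| := hrem t htmem
      _ ≤ A / (Nat.factorial (m+1) : ℝ) * (1/K) := by
          apply mul_le_mul_of_nonneg_left (hωb t htmem) (by positivity)
    have := intervalIntegral.norm_integral_le_of_norm_le_const hb
    calc |∫ t in (-1:ℝ)..x, (f t - p.eval t)| ≤
        A / (Nat.factorial (m+1) : ℝ) * (1/K) * |x - (-1)| := this
    _ = A / (Nat.factorial (m+1) : ℝ) * (1/K) * (x + 1) := by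
        rw [abs_of_nonneg (by linarith [hx.1])]
        ring_nf
  refine le_trans hmain (le_of_eq ?_)
  -- Gamma arithmetic
  have hGam2 : Real.Gamma ((m:ℝ) + 2) = (Nat.factorial (m+1) : ℝ) := by
    have h : ((m:ℝ) + 2) = ((m+1:ℕ):ℝ) + 1 := by push_cast; ring
    rw [h, Real.Gamma_nat_eq_factorial]
  have hGamA : Real.Gamma ((m:ℝ) + 2*α + 1)
      = (∏ j ∈ Finset.range m, (2*α + (j:ℝ) + 1)) * Real.Gamma (2*α + 1) := by
    exact gamma_shift (2*α) (by positivity) m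
  have hGamB : Real.Gamma ((m:ℝ) + α + 1)
      = (∏ j ∈ Finset.range m, (α + (j:ℝ) + 1)) * Real.Gamma (α + 1) := by
    exact gamma_shift α hα m
  set P1 : ℝ := ∏ j ∈ Finset.range m, (α + (j:ℝ) + 1) with hP1def
  set P2 : ℝ := ∏ j ∈ Finset.range m, (2*α + (j:ℝ) + 1) with hP2def
  have hP1 : 0 < P1 := Finset.prod_pos fun j _ => by positivity
  have hP2 : 0 < P2 := Finset.prod_pos fun j _ => by positivity
  have hKeq : K = 2^m * P1 / P2 := by
    have e1 : K = (∏ j ∈ Finset.range m, 2*((j:ℝ)+1+α)) / (∏ j ∈ Finset.range m, ((j:ℝ)+1+2*α)) := by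
      rw [hKdef]; exact Finset.prod_div_distrib _ _
    have e2 : ∏ j ∈ Finset.range m, 2*((j:ℝ)+1+α) = 2^m * P1 := by
      rw [Finset.prod_mul_distrib, Finset.prod_const, Finset.card_range, hP1def]
      congr 1
      exact Finset.prod_congr rfl fun j _ => by ring
    have e3 : ∏ j ∈ Finset.range m, ((j:ℝ)+1+2*α) = P2 := by
      rw [hP2def]
      exact Finset.prod_congr rfl fun j _ => by ring
    rw [e1, e2, e3]
  have hGa1 : 0 < Real.Gamma (α + 1) := Real.Gamma_pos_of_pos (by positivity)
  have hGa2 : 0 < Real.Gamma (2*α + 1) := Real.Gamma_pos_of_pos (by positivity)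
  have h2m : ((2:ℝ) ^ (-(m:ℤ)) : ℝ) = ((2:ℝ)^m)⁻¹ := by
    rw [zpow_neg, zpow_natCast]
  rw [hGam2, hGamA, hGamB, hKeq, h2m]
  have h2mpos : (0:ℝ) < 2^m := by positivity
  field_simp
end
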